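/- arXiv:2011.14207 — 4 statements merged into one kernel-verified Lean document; each statement's English description precedes it below -/
import Mathlib

section
/- Let R be a commutative superalgebra and R[ε₀, ε₁] = R[x,y]/(x², y², xy) the superalgebra of dual super-numbers, where ε₀ is even and ε₁ is odd. For each homogeneous element r ∈ R, the map r̂ defined by r̂(a + ε₀b + ε₁c) = a + (−1)^{|a||r|}(ε_{|r|} b r + ε_{1+|r|} c r) is a superalgebra endomorphism of R[ε₀, ε₁], and for homogeneous r, r' one has (rr')^ = r̂' ∘ r̂. -/
/-- A supercommutative superalgebra structure is encoded by the parity involution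
`σ` (`σ x = x` for even `x`, `σ x = -x` for odd `x`):  even elements are central and
odd elements anticommute with each other. -/
def SuperCommutative {R : Type*} [Ring R] (σ : R → R) : Prop :=
  (∀ x y : R, σ x = x → x * y = y * x) ∧
  (∀ x y : R, σ x = -x → σ y = -y → x * y = -(y * x))

/-- The superalgebra `R[ε₀, ε₁]` of dual super-numbers, modelled as triples
`(a, b, c) = a + ε₀ b + ε₁ c` (with coefficients written to the right of `ε₀, ε₁`).
Here `ε₀` is even, `ε₁` is odd and `ε₀² = ε₁² = ε₀ε₁ = 0`; the multiplication rule
`(a + ε₀b + ε₁c)(a' + ε₀b' + ε₁c') = aa' + ε₀(ab' + ba') + ε₁(σ(a)c' + ca')`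
comes from moving the odd generator `ε₁` past `a`. -/
def dmul {R : Type*} [Ring R] (σ : R →+* R) (u v : R × R × R) : R × R × R :=
  (u.1 * v.1, u.1 * v.2.1 + u.2.1 * v.1, σ u.1 * v.2.2 + u.2.2 * v.1)

/-- The unit `1 = 1 + ε₀·0 + ε₁·0` of `R[ε₀, ε₁]`. -/
def done {R : Type*} [Ring R] : R × R × R := (1, 0, 0)

/-- For a homogeneous element `r` of parity `p` (`p = false`: even, `p = true`: odd), the
endomorphism `r̂` of `R[ε₀, ε₁]` given by
`r̂(a + ε₀b + ε₁c) = a + (−1)^{|a||r|}(ε_{|r|} b r + ε_{1+|r|} c r)`,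
equivalently `ε₀ ↦ ε_{|r|} r`, `ε₁ ↦ ε_{1+|r|} r`.  In the triple model (using the parity
involution `σ` to implement the sign `(−1)^{|a||r|}`):
for even `r`, `r̂(a,b,c) = (a, b r, c r)`; for odd `r`, `r̂(a,b,c) = (a, −σ(c) r, σ(b) r)`. -/
def dhat {R : Type*} [Ring R] (σ : R →+* R) (r : R) (p : Bool) (u : R × R × R) : R × R × R :=
  if p then (u.1, -(σ u.2.2 * r), σ u.2.1 * r) else (u.1, u.2.1 * r, u.2.2 * r)

section Aux
variable {K R : Type*} [Field K] [Ring R] [Algebra K R]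

private lemma cancel_two (h2 : (2 : K) ≠ 0) (a : R) (ha : 2 * a = 0) : a = 0 := by
  have h : ((2:K)⁻¹) • ((2:R) * a) = ((2:K)⁻¹) • (0:R) := by rw [ha]
  rw [smul_zero] at h
  rwa [show (2:R) * a = (2:K) • a by rw [Algebra.smul_def, map_ofNat],
    smul_smul, inv_mul_cancel₀ h2, one_smul] at h

private lemma odd_comm (h2 : (2 : K) ≠ 0) (σ : R →+* R) (hσ : ∀ x, σ (σ x) = x)
    (hsc : SuperCommutative (⇑σ)) {r : R} (hr : σ r = -r) (x : R) :
    σ x * r = r * x := by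
  have he : σ (x + σ x) = x + σ x := by rw [map_add, hσ, add_comm]
  have ho : σ (x - σ x) = -(x - σ x) := by rw [map_sub, hσ, neg_sub]
  have h1 := hsc.1 (x + σ x) r he
  have h2' := hsc.2 (x - σ x) r ho hr
  have key : 2 * (σ x * r - r * x) =
      ((x + σ x) * r - r * (x + σ x)) - ((x - σ x) * r + r * (x - σ x)) := by
    noncomm_ring
  rw [h1, h2'] at key
  simp only [sub_self, neg_add_cancel, sub_zero, zero_sub, neg_zero] at key
  have := cancel_two h2 _ key
  exact sub_eq_zero.mp this
end Aux

/-- Let `R` be a supercommutative superalgebra over a field `K` of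
characteristic `≠ 2`, and `R[ε₀, ε₁]` the superalgebra of dual super-numbers.  For each
homogeneous `r ∈ R`, the map `r̂` is a superalgebra endomorphism of `R[ε₀, ε₁]`
(it is additive, multiplicative and unital), and for homogeneous `r, r'` one has
`(r r')^ = r̂' ∘ r̂`. -/

theorem dhat_is_endomorphism_and_antimultiplicative
    {K R : Type*} [Field K] (h2 : (2 : K) ≠ 0) [Ring R] [Algebra K R]
    (σ : R →+* R) (hσ : ∀ x, σ (σ x) = x) (hsc : SuperCommutative (⇑σ))
    (r : R) (p : Bool) (hr : σ r = if p then -r else r) :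
    (∀ u v : R × R × R, dhat σ r p (u + v) = dhat σ r p u + dhat σ r p v) ∧
    (∀ u v : R × R × R, dhat σ r p (dmul σ u v) = dmul σ (dhat σ r p u) (dhat σ r p v)) ∧
    (dhat σ r p done = done) ∧
    (∀ (r' : R) (p' : Bool), σ r' = (if p' then -r' else r') →
      ∀ u : R × R × R, dhat σ (r * r') (xor p p') u = dhat σ r' p' (dhat σ r p u)) := by

  constructor
  · -- additivity
    intro u v
    cases p <;> simp [dhat, Prod.ext_iff, map_add, add_mul, neg_add, add_comm]
  constructor
  · -- multiplicativity
    intro u v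
    cases p with
    | false =>
      have hre : σ r = r := by simpa using hr
      have hc : ∀ x : R, r * x = x * r := fun x => hsc.1 r x hre
      simp only [dhat, dmul, if_neg Bool.false_ne_true, Bool.false_eq_true, if_false,
        Prod.mk.injEq]
      refine ⟨trivial, ?_, ?_⟩
      · rw [add_mul, mul_assoc, mul_assoc, mul_assoc, ← hc v.1]
      · rw [add_mul, mul_assoc, mul_assoc, mul_assoc, ← hc v.1]
    | true =>
      have hro : σ r = -r := by simpa using hr
      have hc : ∀ x : R, σ x * r = r * x := odd_comm h2 σ hσ hsc hro
      simp only [dhat, dmul, if_pos, Prod.mk.injEq, map_add, map_mul, map_neg, hσ]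
      refine ⟨trivial, ?_, ?_⟩
      · rw [add_mul, mul_assoc, mul_assoc, hc v.1, neg_add, mul_neg, neg_mul,
          ← mul_assoc, ← mul_assoc]
      · rw [add_mul, mul_assoc, mul_assoc, hc v.1, ← mul_assoc, ← mul_assoc]
  constructor
  · -- unitality
    cases p <;> simp [dhat, done]
  · -- anti-multiplicativity
    intro r' p' hr' u
    cases p with
    | false =>
      have hre : σ r = r := by simpa using hr
      cases p' <;>
        simp only [dhat, dmul, Bool.xor_false, Bool.xor_true, Bool.false_xor, Bool.true_xor,
          Bool.not_false, Bool.not_true, Bool.false_eq_true, if_false, if_pos,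
          Prod.mk.injEq, map_mul, map_neg, hre, hσ] <;>
        refine ⟨trivial, ?_, ?_⟩ <;> rw [mul_assoc]
    | true =>
      have hro : σ r = -r := by simpa using hr
      cases p' <;>
        simp only [dhat, dmul, Bool.xor_false, Bool.xor_true, Bool.false_xor, Bool.true_xor,
          Bool.not_false, Bool.not_true, Bool.false_eq_true, if_false, if_pos,
          Prod.mk.injEq, map_mul, map_neg, hro, hσ] <;>
        refine ⟨trivial, ?_, ?_⟩ <;>
        simp [mul_assoc, mul_neg, neg_mul]
end

section
/- Let V be a finite-dimensional purely odd vector space over a field K of characteristic ≠ 2, and let A be a graded Hopf superalgebra generated by its degree-1 component A(1) with A(1) ≅ V consisting of primitive elements, where A is a quotient of Λ(V). Then the canonical epimorphism Λ(V) → A is an isomorphism; i.e., Λ(V) has no proper graded Hopf superalgebra quotients generated in degree 1 with the same degree-1 component. -/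
open ExteriorAlgebra

variable (K : Type*) [Field K]
variable (V : Type*) [AddCommGroup V] [Module K V]

/-- The comultiplication of the Hopf superalgebra `Λ(V)` (all `v ∈ V` primitive).
Using the canonical identification of the super tensor product `Λ(V) ⊗ Λ(V)` with
`Λ(V ⊕ V)`, it is the algebra map induced by the diagonal `V → V ⊕ V`; in particular
`Δ(v) = v ⊗ 1 + 1 ⊗ v` for `v ∈ V`. -/
noncomputable def extComul : ExteriorAlgebra K V →ₐ[K] ExteriorAlgebra K (V × V) :=
  ExteriorAlgebra.lift K
    ⟨(ExteriorAlgebra.ι K (M := V × V)).comp (LinearMap.prod LinearMap.id LinearMap.id),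
      fun _ => ι_sq_zero _⟩

/-- The inclusion `Λ(V) → Λ(V ⊕ V)` as the first tensor factor (`x ↦ x ⊗ 1`). -/
noncomputable def extInl : ExteriorAlgebra K V →ₐ[K] ExteriorAlgebra K (V × V) :=
  ExteriorAlgebra.lift K
    ⟨(ExteriorAlgebra.ι K (M := V × V)).comp (LinearMap.inl K V V), fun _ => ι_sq_zero _⟩

/-- The inclusion `Λ(V) → Λ(V ⊕ V)` as the second tensor factor (`x ↦ 1 ⊗ x`). -/
noncomputable def extInr : ExteriorAlgebra K V →ₐ[K] ExteriorAlgebra K (V × V) :=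
  ExteriorAlgebra.lift K
    ⟨(ExteriorAlgebra.ι K (M := V × V)).comp (LinearMap.inr K V V), fun _ => ι_sq_zero _⟩

/-- The antipode of `Λ(V)`, the algebra map induced by `v ↦ -v`. -/
noncomputable def extAntipode : ExteriorAlgebra K V →ₐ[K] ExteriorAlgebra K V :=
  ExteriorAlgebra.lift K
    ⟨-(ExteriorAlgebra.ι K (M := V)), fun m => by
      simp [ι_sq_zero (R := K) (M := V) m]⟩


section Aux

variable {K : Type*} [Field K]
variable {V : Type*} [AddCommGroup V] [Module K V]
variable {W : Type*} [AddCommGroup W] [Module K W]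


local notation d "⌟" x => CliffordAlgebra.contractLeft d x
local notation "σ" => CliffordAlgebra.involute

/-- Super-Leibniz rule for the left contraction on the exterior algebra. -/
theorem ext_contract_mul (d : Module.Dual K V) (x y : ExteriorAlgebra K V) :
    (d ⌟ (x * y)) = (d ⌟ x) * y + σ x * (d ⌟ y) := by
  induction x using CliffordAlgebra.induction generalizing y with
  | algebraMap r =>
      rw [CliffordAlgebra.contractLeft_algebraMap_mul, CliffordAlgebra.contractLeft_algebraMap,
        zero_mul, zero_add, AlgHom.commutes]
  | ι v =>
      rw [CliffordAlgebra.contractLeft_ι_mul, CliffordAlgebra.contractLeft_ι,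
        CliffordAlgebra.involute_ι, Algebra.smul_def, neg_mul, sub_eq_add_neg]
  | mul a b ha hb =>
      rw [mul_assoc, ha, hb, ha, map_mul]
      noncomm_ring
  | add a b ha hb =>
      simp only [map_add, add_mul, ha, hb]
      abel


/-- Naturality of the main involution with respect to induced algebra maps. -/
theorem ext_involute_lift (f : V →ₗ[K] W)
    (cond : ∀ m, ((ι K (M := W)).comp f) m * ((ι K (M := W)).comp f) m = 0)
    (z : ExteriorAlgebra K V) :
    σ (ExteriorAlgebra.lift K ⟨(ι K).comp f, cond⟩ z) =
      ExteriorAlgebra.lift K ⟨(ι K).comp f, cond⟩ (σ z) := by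
  set φ := ExteriorAlgebra.lift K ⟨(ι K).comp f, cond⟩ with hφ
  suffices h : (CliffordAlgebra.involute.comp φ :
      ExteriorAlgebra K V →ₐ[K] ExteriorAlgebra K W) =
      φ.comp CliffordAlgebra.involute from DFunLike.congr_fun h z
  refine ExteriorAlgebra.hom_ext (LinearMap.ext fun v => ?_)
  show σ (φ (ι K v)) = φ (σ (ι K v))
  rw [hφ, ExteriorAlgebra.lift_ι_apply, show σ (ι K v) = -(ι K v : ExteriorAlgebra K V)
    from CliffordAlgebra.involute_ι v, map_neg, ExteriorAlgebra.lift_ι_apply,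
    LinearMap.comp_apply, show σ (ι K (f v) : ExteriorAlgebra K W) = -(ι K (f v))
      from CliffordAlgebra.involute_ι _]

/-- Naturality of contraction with respect to algebra maps induced by linear maps. -/
theorem ext_contract_lift (f : V →ₗ[K] W)
    (cond : ∀ m, ((ι K (M := W)).comp f) m * ((ι K (M := W)).comp f) m = 0)
    (d : Module.Dual K W) (x : ExteriorAlgebra K V) :
    (d ⌟ (ExteriorAlgebra.lift K ⟨(ι K).comp f, cond⟩ x)) =
      ExteriorAlgebra.lift K ⟨(ι K).comp f, cond⟩ ((d ∘ₗ f) ⌟ x) := by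
  set φ := ExteriorAlgebra.lift K ⟨(ι K).comp f, cond⟩ with hφ
  have hinv : ∀ z : ExteriorAlgebra K V, σ (φ z) = φ (σ z) :=
    ext_involute_lift f cond
  induction x using CliffordAlgebra.induction with
  | algebraMap r =>
      rw [AlgHom.commutes, CliffordAlgebra.contractLeft_algebraMap,
        CliffordAlgebra.contractLeft_algebraMap, map_zero]
  | ι v =>
      rw [show ((CliffordAlgebra.ι (0 : QuadraticForm K V)) v) = ι K v from rfl, hφ,
        ExteriorAlgebra.lift_ι_apply, LinearMap.comp_apply,
        CliffordAlgebra.contractLeft_ι, CliffordAlgebra.contractLeft_ι, AlgHom.commutes,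
        LinearMap.comp_apply]
  | mul a b ha hb =>
      rw [map_mul, ext_contract_mul, ha, hb, hinv, ← map_mul, ← map_mul, ← map_add,
        ← ext_contract_mul]
  | add a b ha hb =>
      rw [map_add, map_add, map_add, map_add, ha, hb]

/-- The counit kills positive exterior degrees. -/
theorem ext_algebraMapInv_pow {n : ℕ} {x : ExteriorAlgebra K V}
    (hx : x ∈ (LinearMap.range (ι K : V →ₗ[K] ExteriorAlgebra K V)) ^ (n + 1)) :
    algebraMapInv x = 0 := by
  rw [pow_succ] at hx
  refine Submodule.mul_induction_on hx (fun a _ b hb => ?_) (fun a b ha hb => by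
    rw [map_add, ha, hb, add_zero])
  obtain ⟨v, rfl⟩ := hb
  rw [map_mul]
  have : algebraMapInv (M := V) (ι K v) = 0 := by
    simp [algebraMapInv]
  rw [this, mul_zero]

/-- Contraction lowers the exterior degree. -/
theorem ext_contract_pow (d : Module.Dual K V) :
    ∀ (n : ℕ) (x : ExteriorAlgebra K V),
    x ∈ (LinearMap.range (ι K : V →ₗ[K] ExteriorAlgebra K V)) ^ (n + 1) →
      (d ⌟ x) ∈ (LinearMap.range (ι K : V →ₗ[K] ExteriorAlgebra K V)) ^ n := by
  intro n
  induction n with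
  | zero =>
      intro x hx
      rw [pow_one] at hx
      obtain ⟨v, rfl⟩ := hx
      rw [CliffordAlgebra.contractLeft_ι, pow_zero]
      exact Submodule.algebraMap_mem _
  | succ m ih =>
      intro x hx
      rw [pow_succ'] at hx
      refine Submodule.mul_induction_on hx (fun a ha b hb => ?_) (fun a b ha hb => by
        rw [map_add]; exact add_mem ha hb)
      obtain ⟨v, rfl⟩ := ha
      rw [CliffordAlgebra.contractLeft_ι_mul]
      refine sub_mem (Submodule.smul_mem _ _ hb) ?_
      rw [pow_succ']
      exact Submodule.mul_mem_mul ⟨v, rfl⟩ (ih b hb)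

end Aux

section Aux2

variable {K : Type*} [Field K]
variable {V : Type*} [AddCommGroup V] [Module K V]

local notation d "⌟" x => CliffordAlgebra.contractLeft d x
local notation "σ" => CliffordAlgebra.involute

/-- Projection onto the second tensor factor: the counit applied to the first factor. -/
noncomputable def extSnd (K V) [Field K] [AddCommGroup V] [Module K V] :
    ExteriorAlgebra K (V × V) →ₐ[K] ExteriorAlgebra K V :=
  ExteriorAlgebra.lift K
    ⟨(ExteriorAlgebra.ι K (M := V)).comp (LinearMap.snd K V V), fun _ => ι_sq_zero _⟩

theorem extSnd_extInr (x : ExteriorAlgebra K V) : extSnd K V (extInr K V x) = x := by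
  suffices h : (extSnd K V).comp (extInr K V) = AlgHom.id K (ExteriorAlgebra K V) from
    DFunLike.congr_fun h x
  refine ExteriorAlgebra.hom_ext (LinearMap.ext fun v => ?_)
  show extSnd K V (extInr K V (ι K v)) = ι K v
  rw [extInr, ExteriorAlgebra.lift_ι_apply, LinearMap.comp_apply, extSnd,
    ExteriorAlgebra.lift_ι_apply]
  rfl

theorem extSnd_extInl (x : ExteriorAlgebra K V) :
    extSnd K V (extInl K V x) = algebraMap K _ (algebraMapInv x) := by
  suffices h : (extSnd K V).comp (extInl K V) =
      ((Algebra.ofId K (ExteriorAlgebra K V)).comp algebraMapInv) from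
    DFunLike.congr_fun h x
  refine ExteriorAlgebra.hom_ext (LinearMap.ext fun v => ?_)
  show extSnd K V (extInl K V (ι K v)) = (Algebra.ofId K _) (algebraMapInv (ι K v))
  rw [extInl, ExteriorAlgebra.lift_ι_apply, LinearMap.comp_apply, extSnd,
    ExteriorAlgebra.lift_ι_apply, show algebraMapInv (ι K v) = (0 : K) by simp [algebraMapInv]]
  show ι K ((LinearMap.snd K V V) (v, 0)) = _
  simp

theorem extSnd_extComul (x : ExteriorAlgebra K V) : extSnd K V (extComul K V x) = x := by
  suffices h : (extSnd K V).comp (extComul K V) = AlgHom.id K (ExteriorAlgebra K V) from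
    DFunLike.congr_fun h x
  refine ExteriorAlgebra.hom_ext (LinearMap.ext fun v => ?_)
  show extSnd K V (extComul K V (ι K v)) = ι K v
  rw [extComul, ExteriorAlgebra.lift_ι_apply, LinearMap.comp_apply, extSnd,
    ExteriorAlgebra.lift_ι_apply]
  rfl

theorem extAntipode_eq_involute (x : ExteriorAlgebra K V) :
    extAntipode K V x = σ x := by
  suffices h : extAntipode K V = (CliffordAlgebra.involute :
      ExteriorAlgebra K V →ₐ[K] ExteriorAlgebra K V) from DFunLike.congr_fun h x
  refine ExteriorAlgebra.hom_ext (LinearMap.ext fun v => ?_)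
  show extAntipode K V (ι K v) = σ (ι K v)
  rw [extAntipode, ExteriorAlgebra.lift_ι_apply,
    show σ (ι K v) = -(ι K v : ExteriorAlgebra K V) from CliffordAlgebra.involute_ι v]
  rfl

theorem contract_extInl (d : Module.Dual K V) (x : ExteriorAlgebra K V) :
    ((d ∘ₗ LinearMap.fst K V V) ⌟ extInl K V x) = extInl K V (d ⌟ x) := by
  have h : (d ∘ₗ LinearMap.fst K V V) ∘ₗ LinearMap.inl K V V = d := by
    ext v; simp
  rw [extInl, ext_contract_lift, h]

theorem contract_extInr (d : Module.Dual K V) (x : ExteriorAlgebra K V) :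
    ((d ∘ₗ LinearMap.fst K V V) ⌟ extInr K V x) = 0 := by
  rw [extInr, ext_contract_lift]
  have : (d ∘ₗ LinearMap.fst K V V) ∘ₗ LinearMap.inr K V V = 0 := by
    ext v; simp
  rw [this, map_zero, LinearMap.zero_apply, map_zero]

theorem contract_extComul (d : Module.Dual K V) (x : ExteriorAlgebra K V) :
    extSnd K V ((d ∘ₗ LinearMap.fst K V V) ⌟ extComul K V x) = (d ⌟ x) := by
  induction x using CliffordAlgebra.induction with
  | algebraMap r =>
      rw [AlgHom.commutes, CliffordAlgebra.contractLeft_algebraMap, map_zero,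
        CliffordAlgebra.contractLeft_algebraMap]
  | ι v =>
      rw [show ((CliffordAlgebra.ι (0 : QuadraticForm K V)) v) = ι K v from rfl,
        extComul, ExteriorAlgebra.lift_ι_apply, LinearMap.comp_apply,
        CliffordAlgebra.contractLeft_ι, AlgHom.commutes, CliffordAlgebra.contractLeft_ι]
      rfl
  | mul a b ha hb =>
      rw [map_mul, ext_contract_mul, map_add, map_mul, map_mul, ha,
        show σ (extComul K V a) = extComul K V (σ a) from ext_involute_lift _ _ a,
        extSnd_extComul, extSnd_extComul, hb, ← ext_contract_mul]
  | add a b ha hb =>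
      rw [map_add, map_add, map_add, ha, hb, map_add]

end Aux2

variable {K V}

/-- For a subspace `J ⊆ Λ(V)`, the image of `J ⊗ Λ(V) + Λ(V) ⊗ J` under the
identification `Λ(V) ⊗ Λ(V) ≅ Λ(V ⊕ V)`: the two-sided ideal generated by the images of
`J` under the two tensor-factor inclusions. -/
noncomputable def hopfIdealSpan (J : Submodule K (ExteriorAlgebra K V)) :
    Submodule K (ExteriorAlgebra K (V × V)) :=
  Submodule.span K {z | ∃ (u w : ExteriorAlgebra K (V × V)) (x : ExteriorAlgebra K V),
    x ∈ J ∧ (z = u * extInl K V x * w ∨ z = u * extInr K V x * w)}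



section Aux3

local notation "σ" => CliffordAlgebra.involute

/-- One factor of the Fock-space projection onto degree zero. -/
noncomputable def extF {t : ℕ} (b : Module.Basis (Fin t) K V) (i : Fin t) :
    ExteriorAlgebra K V →ₗ[K] ExteriorAlgebra K V :=
  LinearMap.id - (LinearMap.mulLeft K (ExteriorAlgebra.ι K (b i))) ∘ₗ
    (CliffordAlgebra.contractLeft (b.coord i))

/-- Composite of the factors indexed by a list. -/
noncomputable def extG {t : ℕ} (b : Module.Basis (Fin t) K V) (l : List (Fin t)) :
    ExteriorAlgebra K V →ₗ[K] ExteriorAlgebra K V :=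
  l.foldr (fun i g => extF b i ∘ₗ g) LinearMap.id

theorem extF_apply {t : ℕ} (b : Module.Basis (Fin t) K V) (i : Fin t) (y : ExteriorAlgebra K V) :
    extF b i y = y - ExteriorAlgebra.ι K (b i) * CliffordAlgebra.contractLeft (b.coord i) y :=
  rfl

theorem extG_nil {t : ℕ} (b : Module.Basis (Fin t) K V) (y : ExteriorAlgebra K V) :
    extG b [] y = y := rfl

theorem extG_cons {t : ℕ} (b : Module.Basis (Fin t) K V) (i : Fin t) (l : List (Fin t))
    (y : ExteriorAlgebra K V) : extG b (i :: l) y = extF b i (extG b l y) := rfl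

theorem extF_ne {t : ℕ} (b : Module.Basis (Fin t) K V) {i j : Fin t} (hij : i ≠ j)
    (y : ExteriorAlgebra K V) :
    extF b i (ExteriorAlgebra.ι K (b j) * y) = ExteriorAlgebra.ι K (b j) * extF b i y := by
  have hco : b.coord i (b j) = 0 := by
    simp [Module.Basis.coord_apply, Module.Basis.repr_self, Finsupp.single_apply, hij.symm]
  have hswap : ExteriorAlgebra.ι K (b i) * ExteriorAlgebra.ι K (b j) =
      -(ExteriorAlgebra.ι K (b j) * ExteriorAlgebra.ι K (b i)) :=
    eq_neg_of_add_eq_zero_left (ι_add_mul_swap _ _)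
  rw [extF_apply, extF_apply, CliffordAlgebra.contractLeft_ι_mul, hco, zero_smul, zero_sub,
    mul_neg, sub_neg_eq_add, ← mul_assoc, hswap, neg_mul, mul_assoc, mul_sub]
  abel

theorem extF_self {t : ℕ} (b : Module.Basis (Fin t) K V) (j : Fin t) (y : ExteriorAlgebra K V) :
    extF b j (ExteriorAlgebra.ι K (b j) * y) = 0 := by
  have hco : b.coord j (b j) = 1 := by
    simp [Module.Basis.coord_apply, Module.Basis.repr_self]
  rw [extF_apply, CliffordAlgebra.contractLeft_ι_mul, hco, one_smul, mul_sub, ← mul_assoc,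
    ι_sq_zero, zero_mul, sub_zero, sub_self]

theorem extG_notMem {t : ℕ} (b : Module.Basis (Fin t) K V) {j : Fin t} (l : List (Fin t))
    (hj : j ∉ l) (y : ExteriorAlgebra K V) :
    extG b l (ExteriorAlgebra.ι K (b j) * y) = ExteriorAlgebra.ι K (b j) * extG b l y := by
  induction l with
  | nil => rw [extG_nil, extG_nil]
  | cons i l ih =>
      have hij : i ≠ j := fun h => hj (h ▸ (List.mem_cons_self (a := i) (l := l)))
      have hjl : j ∉ l := fun h => hj (List.mem_cons_of_mem i h)
      rw [extG_cons, extG_cons, ih hjl, extF_ne b hij]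

theorem extG_mem {t : ℕ} (b : Module.Basis (Fin t) K V) {j : Fin t} (l : List (Fin t))
    (hnd : l.Nodup) (hj : j ∈ l) (y : ExteriorAlgebra K V) :
    extG b l (ExteriorAlgebra.ι K (b j) * y) = 0 := by
  induction l with
  | nil => exact absurd hj (List.not_mem_nil (a := j))
  | cons i l ih =>
      rcases List.mem_cons.mp hj with rfl | hj'
      · have hjl : j ∉ l := (List.nodup_cons.mp hnd).1
        rw [extG_cons, extG_notMem b l hjl, extF_self]
      · rw [extG_cons, ih (List.nodup_cons.mp hnd).2 hj', map_zero]

theorem extG_algebraMap {t : ℕ} (b : Module.Basis (Fin t) K V) (l : List (Fin t)) (r : K) :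
    extG b l (algebraMap K (ExteriorAlgebra K V) r) = algebraMap K _ r := by
  induction l with
  | nil => rw [extG_nil]
  | cons i l ih =>
      rw [extG_cons, ih, extF_apply, CliffordAlgebra.contractLeft_algebraMap, mul_zero, sub_zero]

theorem extG_finRange {t : ℕ} (b : Module.Basis (Fin t) K V) (x : ExteriorAlgebra K V) :
    extG b (List.finRange t) x = algebraMap K _ (algebraMapInv x) := by
  induction x using CliffordAlgebra.left_induction with
  | algebraMap r =>
      rw [extG_algebraMap, show algebraMapInv (algebraMap K (ExteriorAlgebra K V) r) = r from
        ExteriorAlgebra.algebraMap_leftInverse V r]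
  | add x y hx hy => rw [map_add, hx, hy, map_add, map_add]
  | ι_mul x m hx =>
      have hι0 : algebraMapInv (M := V) (ExteriorAlgebra.ι K m) = 0 := by simp [algebraMapInv]
      have hR : algebraMapInv ((ExteriorAlgebra.ι K m) * x) = 0 := by
        rw [map_mul, hι0, zero_mul]
      rw [show (CliffordAlgebra.ι (0 : QuadraticForm K V)) m = ExteriorAlgebra.ι K m from rfl,
        hR, map_zero, ← b.sum_repr m, map_sum, Finset.sum_mul, map_sum]
      refine Finset.sum_eq_zero fun i _ => ?_
      rw [map_smul, smul_mul_assoc, map_smul,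
        extG_mem b (List.finRange t) (List.nodup_finRange t) (List.mem_finRange i), smul_zero]

/-- Nondegeneracy: an element of the exterior algebra killed by the counit and by all
left contractions vanishes. -/
theorem ext_contract_nondegenerate {t : ℕ} (b : Module.Basis (Fin t) K V) (x : ExteriorAlgebra K V)
    (h0 : algebraMapInv x = 0)
    (hc : ∀ d : Module.Dual K V, CliffordAlgebra.contractLeft d x = 0) : x = 0 := by
  have hF : ∀ i : Fin t, extF b i x = x := fun i => by
    rw [extF_apply, hc (b.coord i), mul_zero, sub_zero]
  have hG : ∀ l : List (Fin t), extG b l x = x := by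
    intro l
    induction l with
    | nil => rw [extG_nil]
    | cons i l ih => rw [extG_cons, ih, hF]
  have := extG_finRange b x
  rw [hG, h0, map_zero] at this
  exact this

/-- The key stability property: the image under `extSnd` of the contraction (in the first
tensor factor) of an element of `hopfIdealSpan J` lies back in `J`. -/
theorem extSnd_contract_hopfIdealSpan (d : Module.Dual K V)
    (J : Submodule K (ExteriorAlgebra K V))
    (hJl : ∀ x ∈ J, ∀ y : ExteriorAlgebra K V, y * x ∈ J)
    (hJr : ∀ x ∈ J, ∀ y : ExteriorAlgebra K V, x * y ∈ J)
    (hε : ∀ x ∈ J, algebraMapInv x = 0)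
    (hinvJ : ∀ x ∈ J, σ x ∈ J)
    (hεc : ∀ x ∈ J, algebraMapInv (CliffordAlgebra.contractLeft d x) = 0)
    {z : ExteriorAlgebra K (V × V)} (hz : z ∈ hopfIdealSpan J) :
    extSnd K V (CliffordAlgebra.contractLeft (d ∘ₗ LinearMap.fst K V V) z) ∈ J := by
  induction hz using Submodule.span_induction with
  | mem z hz =>
      obtain ⟨u, w, x, hxJ, hcase⟩ := hz
      rcases hcase with rfl | rfl
      · have e1 : extSnd K V (extInl K V x) = 0 := by
          rw [extSnd_extInl, hε x hxJ, map_zero]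
        have e2 : extSnd K V (extInl K V (CliffordAlgebra.contractLeft d x)) = 0 := by
          rw [extSnd_extInl, hεc x hxJ, map_zero]
        have e3 : extSnd K V (extInl K V (σ x)) = 0 := by
          rw [extSnd_extInl, hε _ (hinvJ x hxJ), map_zero]
        rw [mul_assoc, ext_contract_mul, ext_contract_mul, contract_extInl,
          show σ (extInl K V x) = extInl K V (σ x) from ext_involute_lift _ _ x]
        simp only [map_add, map_mul, e1, e2, e3, zero_mul, mul_zero, add_zero, zero_add]
        exact J.zero_mem
      · rw [mul_assoc, ext_contract_mul, ext_contract_mul, contract_extInr,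
          show σ (extInr K V x) = extInr K V (σ x) from ext_involute_lift _ _ x]
        simp only [map_add, map_mul, extSnd_extInr, zero_mul, zero_add]
        exact J.add_mem (hJl _ (hJr x hxJ _) _) (hJl _ (hJr _ (hinvJ x hxJ) _) _)
  | zero => simp only [map_zero]; exact J.zero_mem
  | add x y _ _ hx hy => rw [map_add, map_add]; exact J.add_mem hx hy
  | smul c x _ hx => rw [map_smul, map_smul]; exact J.smul_mem c hx

end Aux3

/-- Let `V` be a finite-dimensional purely odd vector space over a field
`K` of characteristic `≠ 2`, and let `A = Λ(V)/J` be a graded Hopf superalgebra quotient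
of `Λ(V)` (so `J` is a graded Hopf superideal) generated by its degree-1 component, with
`A(1) ≅ V` consisting of primitive elements, i.e. the quotient map is an isomorphism in
degree 1 (`J ∩ V = 0`).  Then the canonical epimorphism `Λ(V) → A` is an isomorphism,
i.e. `J = 0`:  `Λ(V)` has no proper graded Hopf superalgebra quotients generated in
degree 1 with the same degree-1 component. -/
theorem graded_hopf_quotient_of_exterior_is_iso
    (h2 : (2 : K) ≠ 0) {t : ℕ} (b : Module.Basis (Fin t) K V)
    (J : Submodule K (ExteriorAlgebra K V))
    (hJl : ∀ x ∈ J, ∀ y : ExteriorAlgebra K V, y * x ∈ J)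
    (hJr : ∀ x ∈ J, ∀ y : ExteriorAlgebra K V, x * y ∈ J)
    (hgraded : J = ⨆ n : ℕ,
      J ⊓ (LinearMap.range (ExteriorAlgebra.ι K : V →ₗ[K] ExteriorAlgebra K V)) ^ n)
    (hΔ : ∀ x ∈ J, extComul K V x ∈ hopfIdealSpan J)
    (hε : ∀ x ∈ J, algebraMapInv x = 0)
    (hS : ∀ x ∈ J, extAntipode K V x ∈ J)
    (hdeg1 : J ⊓ LinearMap.range (ExteriorAlgebra.ι K : V →ₗ[K] ExteriorAlgebra K V) = ⊥) :
    J = ⊥ := by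
  classical
  have hinvJ : ∀ x ∈ J, CliffordAlgebra.involute x ∈ J := fun x hx => by
    rw [← extAntipode_eq_involute]; exact hS x hx
  have hεc : ∀ (d : Module.Dual K V), ∀ x ∈ J,
      algebraMapInv (CliffordAlgebra.contractLeft d x) = 0 := by
    intro d x hx
    have hx' : x ∈ ⨆ n : ℕ,
        J ⊓ (LinearMap.range (ExteriorAlgebra.ι K : V →ₗ[K] ExteriorAlgebra K V)) ^ n := by
      rw [← hgraded]; exact hx
    refine Submodule.iSup_induction _
      (motive := fun y => algebraMapInv (CliffordAlgebra.contractLeft d y) = 0) hx' ?_ (by simp) ?_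
    · rintro (_|(_|n)) y hy
      · obtain ⟨r, rfl⟩ := Submodule.mem_one.mp (by simpa using hy.2)
        simp
      · have h1 : y ∈ (⊥ : Submodule K (ExteriorAlgebra K V)) := by
          rw [← hdeg1]; rwa [pow_one] at hy
        obtain rfl := (Submodule.mem_bot _).mp h1
        simp
      · exact ext_algebraMapInv_pow (ext_contract_pow d (n + 1) y hy.2)
    · intro y z hy hz; rw [map_add, map_add, hy, hz, add_zero]
  have hcontract : ∀ x ∈ J, ∀ d : Module.Dual K V,
      CliffordAlgebra.contractLeft d x ∈ J := by
    intro x hx d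
    have h2 := extSnd_contract_hopfIdealSpan d J hJl hJr hε hinvJ (hεc d) (hΔ x hx)
    rwa [contract_extComul] at h2
  have hpow : ∀ n : ℕ,
      J ⊓ (LinearMap.range (ExteriorAlgebra.ι K : V →ₗ[K] ExteriorAlgebra K V)) ^ n = ⊥ := by
    intro n
    induction n using Nat.strong_induction_on with
    | _ n ih =>
      match n, ih with
      | 0, _ =>
          rw [Submodule.eq_bot_iff]
          rintro x ⟨hxJ, hx0⟩
          obtain ⟨r, rfl⟩ := Submodule.mem_one.mp (by simpa using hx0)
          have := hε _ hxJ
          rw [show algebraMapInv (algebraMap K (ExteriorAlgebra K V) r) = r from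
            ExteriorAlgebra.algebraMap_leftInverse V r] at this
          rw [this, map_zero]
      | 1, _ => rw [pow_one]; exact hdeg1
      | (m+2), ih =>
          rw [Submodule.eq_bot_iff]
          rintro x ⟨hxJ, hxp⟩
          refine ext_contract_nondegenerate b x (hε x hxJ) (fun d => ?_)
          have hmem : CliffordAlgebra.contractLeft d x ∈ J ⊓
              (LinearMap.range (ExteriorAlgebra.ι K : V →ₗ[K] ExteriorAlgebra K V)) ^ (m+1) :=
            ⟨hcontract x hxJ d, ext_contract_pow d (m + 1) x hxp⟩
          rw [ih (m+1) (by omega)] at hmem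
          exact (Submodule.mem_bot _).mp hmem
  rw [hgraded]
  exact iSup_eq_bot.mpr hpow
end

section
/- Let Γ(R) be the group with generators e(a, v) for a ∈ R₁, v ∈ V, and f(b, x) for b ∈ R₀ with b² = 0, x ∈ g, subject to the relations: (1) [e(a,v), e(a',v')] = f(−aa', [v,v']), (2) [f(b,x), e(a,v)] = e(ba, [x,v]), (3) [f(b,x), f(b',x')] = f(bb', [x,x']), (4) e(a,v)e(a',v) = f(−aa', ½[v,v]) e(a+a', v), together with additivity in the second argument and triviality when a parameter is 0. Then there is a group homomorphism Γ(R) → Gpl(U(g ⊕ V) ⊗ R) sending e(a,v) ↦ 1 ⊗ 1 + v ⊗ a and f(b,x) ↦ 1 ⊗ 1 + x ⊗ b, where g ⊕ V is the Lie superalgebra with even part g and odd part V. -/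
open TensorProduct

section SuperGadgets

variable (K : Type*) [Field K]

/-- The Koszul sign operator on `(A ⊗ B) ⊗ (A ⊗ B)`: on `(a ⊗ b) ⊗ (c ⊗ d)` with
homogeneous entries it multiplies by `(−1)^{|b||c|}` (implemented via the parity
involutions `σA`, `σB` and division by `2`, valid since `char K ≠ 2`). -/
noncomputable def preSign {A B : Type*}
    [AddCommGroup A] [Module K A] [AddCommGroup B] [Module K B]
    (σA : A →ₗ[K] A) (σB : B →ₗ[K] B) :
    (A ⊗[K] B) ⊗[K] (A ⊗[K] B) →ₗ[K] (A ⊗[K] B) ⊗[K] (A ⊗[K] B) :=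
  (2 : K)⁻¹ •
    (LinearMap.id
      + TensorProduct.map (TensorProduct.map LinearMap.id σB) LinearMap.id
      + TensorProduct.map LinearMap.id (TensorProduct.map σA LinearMap.id)
      - TensorProduct.map (TensorProduct.map LinearMap.id σB) (TensorProduct.map σA LinearMap.id))

/-- The multiplication of the super tensor product `A ⊗ B` of two superalgebras:
`(a ⊗ b)(c ⊗ d) = (−1)^{|b||c|} (ac) ⊗ (bd)` (Koszul sign rule). -/
noncomputable def superMul {A B : Type*} [Ring A] [Algebra K A] [Ring B] [Algebra K B]
    (σA : A →ₗ[K] A) (σB : B →ₗ[K] B) (u v : A ⊗[K] B) : A ⊗[K] B :=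
  (TensorProduct.map (LinearMap.mul' K A) (LinearMap.mul' K B))
    ((TensorProduct.tensorTensorTensorComm K A B A B) (preSign K σA σB (u ⊗ₜ[K] v)))

/-- The canonical map `(H ⊗ R) × (H ⊗ R) → (H ⊗ H) ⊗ R`, `(g, h) ↦ "g ⊗_R h"`, realizing
the identification `(H ⊗ R) ⊗_R (H ⊗ R) ≅ H ⊗ H ⊗ R` (with Koszul signs). -/
noncomputable def muMap {A B : Type*} [Ring A] [Algebra K A] [Ring B] [Algebra K B]
    (σA : A →ₗ[K] A) (σB : B →ₗ[K] B) (u v : A ⊗[K] B) : (A ⊗[K] A) ⊗[K] B :=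
  (TensorProduct.map LinearMap.id (LinearMap.mul' K B))
    ((TensorProduct.tensorTensorTensorComm K A B A B) (preSign K σA σB (u ⊗ₜ[K] v)))

/-- Group-like elements of the Hopf `R`-superalgebra `H ⊗ R`:
`Δ_R(g) = g ⊗_R g` and `ε_R(g) = 1`. -/
def IsGroupLike {H R : Type*} [Ring H] [Algebra K H] [Ring R] [Algebra K R]
    (σH : H →ₗ[K] H) (σR : R →ₗ[K] R)
    (Δ : H →ₗ[K] H ⊗[K] H) (ε : H →ₐ[K] K) (g : H ⊗[K] R) : Prop :=
  (TensorProduct.map Δ LinearMap.id) g = muMap K σH σR g g ∧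
  (TensorProduct.lid K R) ((TensorProduct.map ε.toLinearMap LinearMap.id) g) = 1

end SuperGadgets

section Helpers

open TensorProduct

variable {K A B : Type*} [Field K] [Ring A] [Algebra K A] [Ring B] [Algebra K B]
  (σA : A →ₗ[K] A) (σB : B →ₗ[K] B)

private lemma lequiv_map_sub {M N : Type*} [AddCommGroup M] [Module K M]
    [AddCommGroup N] [Module K N] (e : M ≃ₗ[K] N) (a b : M) :
    e (a - b) = e a - e b :=
  e.toLinearMap.map_sub a b

private lemma half_two_smul {M : Type*} [AddCommGroup M] [Module K M]
    (h2 : (2 : K) ≠ 0) (x : M) : (2 : K)⁻¹ • (x + x) = x := by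
  rw [← two_smul K, smul_smul, inv_mul_cancel₀ h2, one_smul]

lemma superMul_tmul_expand (p r : A) (q s : B) :
    superMul K σA σB (p ⊗ₜ[K] q) (r ⊗ₜ[K] s) =
      (2 : K)⁻¹ • ((p * r) ⊗ₜ[K] (q * s) + (p * r) ⊗ₜ[K] (σB q * s)
        + (p * σA r) ⊗ₜ[K] (q * s) - (p * σA r) ⊗ₜ[K] (σB q * s)) := by
  simp only [superMul, preSign, LinearMap.smul_apply, LinearMap.sub_apply, LinearMap.add_apply,
    LinearMap.id_apply, TensorProduct.map_tmul, LinearMap.id_coe, id_eq,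
    LinearEquiv.map_smul, lequiv_map_sub, LinearEquiv.map_add, LinearMap.map_smul,
    LinearMap.map_sub, LinearMap.map_add,
    TensorProduct.tensorTensorTensorComm_tmul, LinearMap.mul'_apply]

lemma muMap_tmul_expand (p r : A) (q s : B) :
    muMap K σA σB (p ⊗ₜ[K] q) (r ⊗ₜ[K] s) =
      (2 : K)⁻¹ • ((p ⊗ₜ[K] r) ⊗ₜ[K] (q * s) + (p ⊗ₜ[K] r) ⊗ₜ[K] (σB q * s)
        + (p ⊗ₜ[K] σA r) ⊗ₜ[K] (q * s) - (p ⊗ₜ[K] σA r) ⊗ₜ[K] (σB q * s)) := by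
  simp only [muMap, preSign, LinearMap.smul_apply, LinearMap.sub_apply, LinearMap.add_apply,
    LinearMap.id_apply, TensorProduct.map_tmul, LinearMap.id_coe, id_eq,
    LinearEquiv.map_smul, lequiv_map_sub, LinearEquiv.map_add, LinearMap.map_smul,
    LinearMap.map_sub, LinearMap.map_add,
    TensorProduct.tensorTensorTensorComm_tmul, LinearMap.mul'_apply]

lemma superMul_evenL (h2 : (2 : K) ≠ 0) {q : B} (hq : σB q = q) (p r : A) (s : B) :
    superMul K σA σB (p ⊗ₜ[K] q) (r ⊗ₜ[K] s) = (p * r) ⊗ₜ[K] (q * s) := by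
  rw [superMul_tmul_expand, hq, add_sub_cancel_right, half_two_smul h2]

lemma superMul_evenR (h2 : (2 : K) ≠ 0) {r : A} (hr : σA r = r) (p : A) (q s : B) :
    superMul K σA σB (p ⊗ₜ[K] q) (r ⊗ₜ[K] s) = (p * r) ⊗ₜ[K] (q * s) := by
  rw [superMul_tmul_expand, hr]
  have h : (p * r) ⊗ₜ[K] (q * s) + (p * r) ⊗ₜ[K] (σB q * s) + (p * r) ⊗ₜ[K] (q * s)
      - (p * r) ⊗ₜ[K] (σB q * s)
      = (p * r) ⊗ₜ[K] (q * s) + (p * r) ⊗ₜ[K] (q * s) := by abel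
  rw [h, half_two_smul h2]

lemma superMul_oo (h2 : (2 : K) ≠ 0) {q : B} {r : A} (hq : σB q = -q) (hr : σA r = -r)
    (p : A) (s : B) :
    superMul K σA σB (p ⊗ₜ[K] q) (r ⊗ₜ[K] s) = -((p * r) ⊗ₜ[K] (q * s)) := by
  rw [superMul_tmul_expand, hq, hr]
  have h : (p * r) ⊗ₜ[K] (q * s) + (p * r) ⊗ₜ[K] (-q * s) + (p * -r) ⊗ₜ[K] (q * s)
      - (p * -r) ⊗ₜ[K] (-q * s)
      = -((p * r) ⊗ₜ[K] (q * s)) + -((p * r) ⊗ₜ[K] (q * s)) := by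
    simp only [neg_mul, mul_neg, tmul_neg, neg_tmul, neg_neg]
    abel
  rw [h, half_two_smul h2]

lemma muMap_evenL (h2 : (2 : K) ≠ 0) {q : B} (hq : σB q = q) (p r : A) (s : B) :
    muMap K σA σB (p ⊗ₜ[K] q) (r ⊗ₜ[K] s) = (p ⊗ₜ[K] r) ⊗ₜ[K] (q * s) := by
  rw [muMap_tmul_expand, hq, add_sub_cancel_right, half_two_smul h2]

lemma muMap_evenR (h2 : (2 : K) ≠ 0) {r : A} (hr : σA r = r) (p : A) (q s : B) :
    muMap K σA σB (p ⊗ₜ[K] q) (r ⊗ₜ[K] s) = (p ⊗ₜ[K] r) ⊗ₜ[K] (q * s) := by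
  rw [muMap_tmul_expand, hr]
  have h : (p ⊗ₜ[K] r) ⊗ₜ[K] (q * s) + (p ⊗ₜ[K] r) ⊗ₜ[K] (σB q * s)
      + (p ⊗ₜ[K] r) ⊗ₜ[K] (q * s) - (p ⊗ₜ[K] r) ⊗ₜ[K] (σB q * s)
      = (p ⊗ₜ[K] r) ⊗ₜ[K] (q * s) + (p ⊗ₜ[K] r) ⊗ₜ[K] (q * s) := by abel
  rw [h, half_two_smul h2]

lemma muMap_oo (h2 : (2 : K) ≠ 0) {q : B} {r : A} (hq : σB q = -q) (hr : σA r = -r)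
    (p : A) (s : B) :
    muMap K σA σB (p ⊗ₜ[K] q) (r ⊗ₜ[K] s) = -((p ⊗ₜ[K] r) ⊗ₜ[K] (q * s)) := by
  rw [muMap_tmul_expand, hq, hr]
  have h : (p ⊗ₜ[K] r) ⊗ₜ[K] (q * s) + (p ⊗ₜ[K] r) ⊗ₜ[K] ((-q) * s)
      + (p ⊗ₜ[K] (-r)) ⊗ₜ[K] (q * s) - (p ⊗ₜ[K] (-r)) ⊗ₜ[K] ((-q) * s)
      = -((p ⊗ₜ[K] r) ⊗ₜ[K] (q * s)) + -((p ⊗ₜ[K] r) ⊗ₜ[K] (q * s)) := by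
    simp only [neg_mul, tmul_neg, neg_tmul, neg_neg]
    abel
  rw [h, half_two_smul h2]

lemma superMul_add_right (u w w' : A ⊗[K] B) :
    superMul K σA σB u (w + w') = superMul K σA σB u w + superMul K σA σB u w' := by
  simp only [superMul, tmul_add, LinearMap.map_add, LinearEquiv.map_add]

lemma superMul_sub_right (u w w' : A ⊗[K] B) :
    superMul K σA σB u (w - w') = superMul K σA σB u w - superMul K σA σB u w' := by
  simp only [superMul, tmul_sub, LinearMap.map_sub, lequiv_map_sub]

lemma superMul_add_left (u u' w : A ⊗[K] B) :
    superMul K σA σB (u + u') w = superMul K σA σB u w + superMul K σA σB u' w := by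
  simp only [superMul, add_tmul, LinearMap.map_add, LinearEquiv.map_add]

lemma muMap_add_right (u w w' : A ⊗[K] B) :
    muMap K σA σB u (w + w') = muMap K σA σB u w + muMap K σA σB u w' := by
  simp only [muMap, tmul_add, LinearMap.map_add, LinearEquiv.map_add]

lemma muMap_add_left (u u' w : A ⊗[K] B) :
    muMap K σA σB (u + u') w = muMap K σA σB u w + muMap K σA σB u' w := by
  simp only [muMap, add_tmul, LinearMap.map_add, LinearEquiv.map_add]

lemma superMul_one_left (h2 : (2 : K) ≠ 0) (hσB1 : σB 1 = 1) (Z : A ⊗[K] B) :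
    superMul K σA σB ((1 : A) ⊗ₜ[K] (1 : B)) Z = Z := by
  induction Z using TensorProduct.induction_on with
  | zero =>
    simp only [superMul, tmul_zero, LinearMap.map_zero, LinearEquiv.map_zero]
  | tmul r s => rw [superMul_evenL σA σB h2 hσB1, one_mul, one_mul]
  | add w w' hw hw' => rw [superMul_add_right, hw, hw']

lemma superMul_oneadd_left (h2 : (2 : K) ≠ 0) (hσB1 : σB 1 = 1) (p : A) (q : B)
    (Z : A ⊗[K] B) :
    superMul K σA σB ((1 : A) ⊗ₜ[K] (1 : B) + p ⊗ₜ[K] q) Z =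
      Z + superMul K σA σB (p ⊗ₜ[K] q) Z := by
  rw [superMul_add_left, superMul_one_left σA σB h2 hσB1]

lemma star_ee (h2 : (2 : K) ≠ 0) (hσA1 : σA 1 = 1) (hσB1 : σB 1 = 1)
    {q : B} (hq : σB q = q) (p r : A) (s : B) :
    superMul K σA σB ((1 : A) ⊗ₜ[K] (1 : B) + p ⊗ₜ[K] q)
        ((1 : A) ⊗ₜ[K] (1 : B) + r ⊗ₜ[K] s) =
      (1 : A) ⊗ₜ[K] (1 : B) + r ⊗ₜ[K] s + p ⊗ₜ[K] q + (p * r) ⊗ₜ[K] (q * s) := by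
  rw [superMul_oneadd_left σA σB h2 hσB1, superMul_add_right,
    superMul_evenR σA σB h2 hσA1, superMul_evenL σA σB h2 hq, mul_one, mul_one]
  abel

lemma star_oe (h2 : (2 : K) ≠ 0) (hσA1 : σA 1 = 1) (hσB1 : σB 1 = 1)
    {q : B} {r : A} (hq : σB q = -q) (hr : σA r = r) (p : A) (s : B) :
    superMul K σA σB ((1 : A) ⊗ₜ[K] (1 : B) + p ⊗ₜ[K] q)
        ((1 : A) ⊗ₜ[K] (1 : B) + r ⊗ₜ[K] s) =
      (1 : A) ⊗ₜ[K] (1 : B) + r ⊗ₜ[K] s + p ⊗ₜ[K] q + (p * r) ⊗ₜ[K] (q * s) := by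
  rw [superMul_oneadd_left σA σB h2 hσB1, superMul_add_right,
    superMul_evenR σA σB h2 hσA1, superMul_evenR σA σB h2 hr, mul_one, mul_one]
  abel

lemma star_oo' (h2 : (2 : K) ≠ 0) (hσA1 : σA 1 = 1) (hσB1 : σB 1 = 1)
    {q : B} {r : A} (hq : σB q = -q) (hr : σA r = -r) (p : A) (s : B) :
    superMul K σA σB ((1 : A) ⊗ₜ[K] (1 : B) + p ⊗ₜ[K] q)
        ((1 : A) ⊗ₜ[K] (1 : B) + r ⊗ₜ[K] s) =
      (1 : A) ⊗ₜ[K] (1 : B) + r ⊗ₜ[K] s + p ⊗ₜ[K] q - (p * r) ⊗ₜ[K] (q * s) := by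
  rw [superMul_oneadd_left σA σB h2 hσB1, superMul_add_right,
    superMul_evenR σA σB h2 hσA1, superMul_oo σA σB h2 hq hr, mul_one, mul_one]
  abel

end Helpers

/-- Let `(G, V)` be a Harish-Chandra pair over a field `K` of
characteristic `≠ 2`, with `g = Lie(G)`, a symmetric bilinear bracket `[,] : V × V → g`
and action `ρ` of `g` on `V`, making `g ⊕ V` a Lie superalgebra; let `U` be its universal
enveloping superalgebra (given abstractly: an associative superalgebra with even/odd
embeddings `j_g`, `j_V` satisfying the enveloping relations, together with its Hopf
superalgebra comultiplication `Δ_U` and counit `ε_U`, for which `j_g x`, `j_V v` are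
primitive), and `R` a supercommutative superalgebra.  Then there is a group homomorphism
`Γ(R) → Gpl(U(g ⊕ V) ⊗ R)` sending `e(a,v) ↦ 1 ⊗ 1 + v ⊗ a` and
`f(b,x) ↦ 1 ⊗ 1 + x ⊗ b`: that is, the elements `E(a,v) = 1⊗1 + j_V v ⊗ a` and
`F(b,x) = 1⊗1 + j_g x ⊗ b` of `U ⊗ R` are invertible group-like elements satisfying the
defining relations (1)–(4) of `Γ(R)` with respect to the super tensor multiplication `⋆`,
so the assignment extends (uniquely) to the presented group `Γ(R)`. -/
theorem harish_chandra_relations_hold_among_grouplikes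
    {K 𝔤 V U R : Type*} [Field K] (h2 : (2 : K) ≠ 0)
    [LieRing 𝔤] [LieAlgebra K 𝔤] [AddCommGroup V] [Module K V]
    [Ring U] [Algebra K U] [Ring R] [Algebra K R]
    -- the Harish-Chandra data
    (br : V →ₗ[K] V →ₗ[K] 𝔤) (hbr : ∀ v w, br v w = br w v)
    (ρ : 𝔤 →ₗ[K] V →ₗ[K] V)
    -- the enveloping superalgebra `U = U(g ⊕ V)`
    (σU : U →ₐ[K] U) (hσU : ∀ u, σU (σU u) = u)
    (jg : 𝔤 →ₗ[K] U) (jV : V →ₗ[K] U)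
    (hjg_even : ∀ x, σU (jg x) = jg x) (hjV_odd : ∀ v, σU (jV v) = -(jV v))
    (hgg : ∀ x y, jg ⁅x, y⁆ = jg x * jg y - jg y * jg x)
    (hvv : ∀ v w, jg (br v w) = jV v * jV w + jV w * jV v)
    (hgv : ∀ x v, jV (ρ x v) = jg x * jV v - jV v * jg x)
    (ΔU : U →ₗ[K] U ⊗[K] U) (εU : U →ₐ[K] K)
    (hΔ1 : ΔU 1 = (1 : U) ⊗ₜ[K] (1 : U))
    (hΔmul : ∀ a b : U, ΔU (a * b) = superMul K σU.toLinearMap σU.toLinearMap (ΔU a) (ΔU b))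
    (hprim_g : ∀ x, ΔU (jg x) = jg x ⊗ₜ[K] 1 + 1 ⊗ₜ[K] jg x)
    (hprim_V : ∀ v, ΔU (jV v) = jV v ⊗ₜ[K] 1 + 1 ⊗ₜ[K] jV v)
    (hε_g : ∀ x, εU (jg x) = 0) (hε_V : ∀ v, εU (jV v) = 0)
    -- the supercommutative superalgebra `R`
    (σR : R →ₐ[K] R) (hσR : ∀ r, σR (σR r) = r)
    (hscR : (∀ x y : R, σR x = x → x * y = y * x) ∧
            (∀ x y : R, σR x = -x → σR y = -y → x * y = -(y * x))) :
    -- write `⋆` for the super tensor multiplication of `U ⊗ R`,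
    -- `E a v = 1⊗1 + j_V v ⊗ a` and `F b x = 1⊗1 + j_g x ⊗ b`
    ∀ (a a' : R), σR a = -a → σR a' = -a' →
    ∀ (b b' : R), σR b = b → b * b = 0 → σR b' = b' → b' * b' = 0 →
    ∀ (v v' : V) (x x' : 𝔤),
    letI star : U ⊗[K] R → U ⊗[K] R → U ⊗[K] R :=
      superMul K σU.toLinearMap σR.toLinearMap
    letI E : R → V → U ⊗[K] R := fun c w => (1 : U) ⊗ₜ[K] (1 : R) + jV w ⊗ₜ[K] c
    letI F : R → 𝔤 → U ⊗[K] R := fun c y => (1 : U) ⊗ₜ[K] (1 : R) + jg y ⊗ₜ[K] c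
    -- the images are group-like …
    (IsGroupLike K σU.toLinearMap σR.toLinearMap ΔU εU (E a v)) ∧
    (IsGroupLike K σU.toLinearMap σR.toLinearMap ΔU εU (F b x)) ∧
    -- … and invertible (`E(a,v)⁻¹ = E(−a,v)`, `F(b,x)⁻¹ = F(−b,x)`) …
    (star (E a v) (E (-a) v) = (1 : U) ⊗ₜ[K] (1 : R)) ∧
    (star (E (-a) v) (E a v) = (1 : U) ⊗ₜ[K] (1 : R)) ∧
    (star (F b x) (F (-b) x) = (1 : U) ⊗ₜ[K] (1 : R)) ∧
    (star (F (-b) x) (F b x) = (1 : U) ⊗ₜ[K] (1 : R)) ∧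
    -- … and satisfy the defining relations (1)–(4) of `Γ(R)`
    -- (1)  [e(a,v), e(a',v')] = f(−aa', [v,v'])
    (star (E a v) (E a' v') =
      star (F (-(a * a')) (br v v')) (star (E a' v') (E a v))) ∧
    -- (2)  [f(b,x), e(a,v)] = e(ba, [x,v])
    (star (F b x) (E a v) = star (E (b * a) (ρ x v)) (star (E a v) (F b x))) ∧
    -- (3)  [f(b,x), f(b',x')] = f(bb', [x,x'])
    (star (F b x) (F b' x') =
      star (F (b * b') ⁅x, x'⁆) (star (F b' x') (F b x))) ∧
    -- (4)  e(a,v) e(a',v) = f(−aa', ½[v,v]) e(a+a', v)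
    (star (E a v) (E a' v) =
      star (F (-(a * a')) ((2 : K)⁻¹ • br v v)) (E (a + a') v)) := by
  
  intro a a' ha ha' b b' hb hb2 hb' hb'2 v v' x x'
  have hσU1 : σU.toLinearMap (1 : U) = 1 := by simp
  have hσR1 : σR.toLinearMap (1 : R) = 1 := by simp
  have haL : σR.toLinearMap a = -a := by simpa using ha
  have ha'L : σR.toLinearMap a' = -a' := by simpa using ha'
  have hbL : σR.toLinearMap b = b := by simpa using hb
  have hb'L : σR.toLinearMap b' = b' := by simpa using hb'
  have hnaL : σR.toLinearMap (-a) = -(-a) := by simp [ha]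
  have hnbL : σR.toLinearMap (-b) = -b := by simp [hb]
  have hVvL : σU.toLinearMap (jV v) = -(jV v) := by simpa using hjV_odd v
  have hVv'L : σU.toLinearMap (jV v') = -(jV v') := by simpa using hjV_odd v'
  have hXL : σU.toLinearMap (jg x) = jg x := by simpa using hjg_even x
  have hVXL : σU.toLinearMap (jV v * jg x) = -(jV v * jg x) := by
    simp [map_mul, hjV_odd v, hjg_even x]
  have odd_sq : ∀ c : R, σR c = -c → c * c = 0 := by
    intro c hc
    have h1 : c * c + c * c = 0 := by
      nth_rewrite 1 [hscR.2 c c hc hc]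
      exact neg_add_cancel _
    calc c * c = (2 : K)⁻¹ • (c * c + c * c) := by
          rw [← two_smul K, smul_smul, inv_mul_cancel₀ h2, one_smul]
      _ = 0 := by rw [h1, smul_zero]
  have haa : a * a = 0 := odd_sq a ha
  have ha'a' : a' * a' = 0 := odd_sq a' ha'
  have ha'a : a' * a = -(a * a') := hscR.2 a' a ha' ha
  have hab : a * b = b * a := (hscR.1 b a hb).symm
  have hc_a : a * a' * a = 0 := by
    rw [mul_assoc, ha'a, mul_neg, ← mul_assoc, haa, zero_mul, neg_zero]
  have hc_a' : a * a' * a' = 0 := by rw [mul_assoc, ha'a', mul_zero]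
  have hc_c : a * a' * (a' * a) = 0 := by
    rw [ha'a, mul_neg, ← mul_assoc, hc_a, zero_mul, neg_zero]
  have hba_b : b * a * b = 0 := by rw [mul_assoc, hab, ← mul_assoc, hb2, zero_mul]
  have hba_a : b * a * a = 0 := by rw [mul_assoc, haa, mul_zero]
  have hba_ab : b * a * (a * b) = 0 := by rw [← mul_assoc, hba_a, zero_mul]
  have hb'b : b' * b = b * b' := hscR.1 b' b hb'
  have hbb_b : b * b' * b = 0 := by rw [mul_assoc, hb'b, ← mul_assoc, hb2, zero_mul]
  have hbb_b' : b * b' * b' = 0 := by rw [mul_assoc, hb'2, mul_zero]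
  have hbb_bb : b * b' * (b' * b) = 0 := by rw [hb'b, ← mul_assoc, hbb_b, zero_mul]
  have hcl : σR.toLinearMap (-(a * a')) = -(a * a') := by simp [ha, ha']
  have hbaL : σR.toLinearMap (b * a) = -(b * a) := by simp [hb, ha]
  have hbbL : σR.toLinearMap (b * b') = b * b' := by simp [hb, hb']
  have hca : -(a * a') * a = 0 := by rw [neg_mul, hc_a, neg_zero]
  have hca' : -(a * a') * a' = 0 := by rw [neg_mul, hc_a', neg_zero]
  have hcc : -(a * a') * (a' * a) = 0 := by rw [neg_mul, hc_c, neg_zero]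
  have hc4 : -(a * a') * (a + a') = 0 := by rw [mul_add, hca, hca', add_zero]
  have hana : a * -a = 0 := by rw [mul_neg, haa, neg_zero]
  have hnaa : -a * a = 0 := by rw [neg_mul, haa, neg_zero]
  have hbnb : b * -b = 0 := by rw [mul_neg, hb2, neg_zero]
  have hnbb : -b * b = 0 := by rw [neg_mul, hb2, neg_zero]
  refine ⟨⟨?_, ?_⟩, ⟨?_, ?_⟩, ?_, ?_, ?_, ?_, ?_, ?_, ?_, ?_⟩
  · -- E group-like: comultiplication
    rw [map_add, TensorProduct.map_tmul, TensorProduct.map_tmul, hΔ1, hprim_V,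
      muMap_add_left, muMap_add_right, muMap_add_right,
      muMap_evenL _ _ h2 hσR1, muMap_evenL _ _ h2 hσR1,
      muMap_evenR _ _ h2 hσU1, muMap_oo _ _ h2 haL hVvL]
    simp only [LinearMap.id_coe, id_eq, one_mul, mul_one, haa, tmul_zero, neg_zero, add_zero]
    rw [add_tmul]
    abel
  · -- E group-like: counit
    simp [hε_V]
  · -- F group-like: comultiplication
    rw [map_add, TensorProduct.map_tmul, TensorProduct.map_tmul, hΔ1, hprim_g,
      muMap_add_left, muMap_add_right, muMap_add_right,
      muMap_evenL _ _ h2 hσR1, muMap_evenL _ _ h2 hσR1,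
      muMap_evenR _ _ h2 hσU1, muMap_evenL _ _ h2 hbL]
    simp only [LinearMap.id_coe, id_eq, one_mul, mul_one, hb2, tmul_zero, add_zero]
    rw [add_tmul]
    abel
  · -- F group-like: counit
    simp [hε_g]
  · -- E(a,v) ⋆ E(-a,v) = 1
    rw [star_oo' _ _ h2 hσU1 hσR1 haL hVvL, hana, tmul_zero, sub_zero, tmul_neg]
    abel
  · -- E(-a,v) ⋆ E(a,v) = 1
    rw [star_oo' _ _ h2 hσU1 hσR1 hnaL hVvL, hnaa, tmul_zero, sub_zero, tmul_neg]
    abel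
  · -- F(b,x) ⋆ F(-b,x) = 1
    rw [star_ee _ _ h2 hσU1 hσR1 hbL, hbnb, tmul_zero, add_zero, tmul_neg]
    abel
  · -- F(-b,x) ⋆ F(b,x) = 1
    rw [star_ee _ _ h2 hσU1 hσR1 hnbL, hnbb, tmul_zero, add_zero, tmul_neg]
    abel
  · -- relation (1)
    rw [star_oo' _ _ h2 hσU1 hσR1 haL hVv'L,
      star_oo' _ _ h2 hσU1 hσR1 ha'L hVvL,
      superMul_oneadd_left _ _ h2 hσR1,
      superMul_sub_right, superMul_add_right, superMul_add_right,
      superMul_evenR _ _ h2 hσU1,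
      superMul_evenL _ _ h2 hcl,
      superMul_evenL _ _ h2 hcl,
      superMul_evenL _ _ h2 hcl]
    simp only [mul_one, one_mul, hca, hca', hcc, tmul_zero, sub_zero, add_zero]
    rw [ha'a, hvv, add_tmul]
    simp only [tmul_neg, sub_neg_eq_add, neg_neg]
    abel
  · -- relation (2)
    rw [star_ee _ _ h2 hσU1 hσR1 hbL,
      star_oe _ _ h2 hσU1 hσR1 haL hXL,
      superMul_oneadd_left _ _ h2 hσR1,
      superMul_add_right, superMul_add_right, superMul_add_right,
      superMul_evenR _ _ h2 hσU1,
      superMul_evenR _ _ h2 hXL,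
      superMul_oo _ _ h2 hbaL hVvL,
      superMul_oo _ _ h2 hbaL hVXL]
    simp only [mul_one, one_mul, hba_b, hba_a, hba_ab, tmul_zero, add_zero, neg_zero]
    rw [hab, hgv, sub_tmul]
    abel
  · -- relation (3)
    rw [star_ee _ _ h2 hσU1 hσR1 hbL,
      star_ee _ _ h2 hσU1 hσR1 hb'L,
      superMul_oneadd_left _ _ h2 hσR1,
      superMul_add_right, superMul_add_right, superMul_add_right,
      superMul_evenR _ _ h2 hσU1,
      superMul_evenL _ _ h2 hbbL,
      superMul_evenL _ _ h2 hbbL,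
      superMul_evenL _ _ h2 hbbL]
    simp only [mul_one, one_mul, hbb_b, hbb_b', hbb_bb, tmul_zero, add_zero]
    rw [hb'b, hgg, sub_tmul]
    abel
  · -- relation (4)
    rw [star_oo' _ _ h2 hσU1 hσR1 haL hVvL,
      star_ee _ _ h2 hσU1 hσR1 hcl,
      hc4, tmul_zero, add_zero, tmul_add, LinearMap.map_smul, hvv]
    have hhalf : (2 : K)⁻¹ • (jV v * jV v + jV v * jV v) = jV v * jV v := by
      rw [← two_smul K, smul_smul, inv_mul_cancel₀ h2, one_smul]
    rw [hhalf, tmul_neg]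
    abel
end

section
/- In the group Γ(R) generated by elements e(a,v) (a ∈ R₁, v ∈ V) and f(b,x) (b ∈ R₀, b² = 0, x ∈ g) subject to relations (1)–(4) as in the Harish-Chandra pair construction, fix a basis v₁, ..., v_t of V. Then every element generated by the e(a,v) and f(b,x) can be written as f · e(a₁, v₁) ⋯ e(a_t, v_t) with f in the subgroup generated by the f(b,x) and a_i ∈ R₁. -/
/-- Left ideal spanned by length-`k` products of elements of `P`. -/
def HCJ {R : Type*} [Ring R] (P : List R) (k : ℕ) : Submodule R R :=
  Submodule.span R {x | ∃ l : List R, l.length = k ∧ (∀ p ∈ l, p ∈ P) ∧ x = l.prod}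

section RingAux

variable {K R : Type*} [Field K] [Ring R] [Algebra K R]
variable (σ : R →ₐ[K] R)

theorem HCodd_sq (h2 : (2 : K) ≠ 0)
    (hsc2 : ∀ x y : R, σ x = -x → σ y = -y → x * y = -(y * x))
    {a : R} (ha : σ a = -a) : a * a = 0 := by
  have h := hsc2 a a ha ha
  have h' : (2 : K) • (a * a) = 0 := by
    rw [two_smul]
    rw [eq_neg_iff_add_eq_zero] at h
    exact h
  calc a * a = (2 : K)⁻¹ • ((2 : K) • (a * a)) := by
        rw [smul_smul, inv_mul_cancel₀ h2, one_smul]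
    _ = 0 := by rw [h', smul_zero]

theorem HCodd_mul (h2 : (2 : K) ≠ 0) (hσ : ∀ x, σ (σ x) = x)
    (hsc1 : ∀ x y : R, σ x = x → x * y = y * x)
    (hsc2 : ∀ x y : R, σ x = -x → σ y = -y → x * y = -(y * x))
    {g : R} (hg : σ g = -g) (r : R) : g * r = σ r * g := by
  set rp : R := (2 : K)⁻¹ • (r + σ r) with hrp_def
  set rm : R := (2 : K)⁻¹ • (r - σ r) with hrm_def
  have hrp : σ rp = rp := by
    rw [hrp_def, map_smul, map_add, hσ, add_comm]
  have hrm : σ rm = -rm := by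
    rw [hrm_def, map_smul, map_sub, hσ, ← smul_neg, neg_sub]
  have hsum : rp + rm = r := by
    rw [hrp_def, hrm_def, ← smul_add]
    have : r + σ r + (r - σ r) = (2 : K) • r := by
      rw [two_smul]; abel
    rw [this, smul_smul, inv_mul_cancel₀ h2, one_smul]
  have hdiff : rp - rm = σ r := by
    rw [hrp_def, hrm_def, ← smul_sub]
    have : r + σ r - (r - σ r) = (2 : K) • σ r := by
      rw [two_smul]; abel
    rw [this, smul_smul, inv_mul_cancel₀ h2, one_smul]
  have e1 : g * rp = rp * g := (hsc1 rp g hrp).symm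
  have e2 : g * rm = -(rm * g) := hsc2 g rm hg hrm
  calc g * r = g * (rp + rm) := by rw [hsum]
    _ = g * rp + g * rm := by rw [mul_add]
    _ = rp * g + -(rm * g) := by rw [e1, e2]
    _ = (rp - rm) * g := by rw [sub_mul]; abel
    _ = σ r * g := by rw [hdiff]

theorem HCoo_sq (h2 : (2 : K) ≠ 0)
    (hsc2 : ∀ x y : R, σ x = -x → σ y = -y → x * y = -(y * x))
    {a d : R} (ha : σ a = -a) (hd : σ d = -d) : (a * d) * (a * d) = 0 := by
  have h1 : d * (a * d) = 0 := by
    rw [← mul_assoc, hsc2 d a hd ha, neg_mul, mul_assoc, HCodd_sq σ h2 hsc2 hd,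
      mul_zero, neg_zero]
  rw [mul_assoc, h1, mul_zero]

end RingAux

section JAux

variable {K R : Type*} [Field K] [Ring R] [Algebra K R]
variable (σ : R →ₐ[K] R) (P : List R)

theorem HCJ_param {p : R} (hp : p ∈ P) : p ∈ HCJ P 1 :=
  Submodule.subset_span ⟨[p], rfl, by simpa using hp, by simp⟩

theorem HCJ_mono_list {P' : List R} (h : ∀ p ∈ P, p ∈ P') (k : ℕ) :
    HCJ P k ≤ HCJ P' k := by
  apply Submodule.span_mono
  rintro x ⟨l, hl, hm, rfl⟩
  exact ⟨l, hl, fun p hp => h p (hm p hp), rfl⟩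

theorem HCJ_homc (h2 : (2 : K) ≠ 0) (hσ : ∀ x, σ (σ x) = x)
    (hsc1 : ∀ x y : R, σ x = x → x * y = y * x)
    (hsc2 : ∀ x y : R, σ x = -x → σ y = -y → x * y = -(y * x))
    (hPh : ∀ p ∈ P, σ p = p ∨ σ p = -p)
    {p : R} (hp : p ∈ P) (r : R) : ∃ r', p * r = r' * p := by
  rcases hPh p hp with h | h
  · exact ⟨r, hsc1 p r h⟩
  · exact ⟨σ r, HCodd_mul σ h2 hσ hsc1 hsc2 h r⟩

theorem HCJ_mon_mul (h2 : (2 : K) ≠ 0) (hσ : ∀ x, σ (σ x) = x)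
    (hsc1 : ∀ x y : R, σ x = x → x * y = y * x)
    (hsc2 : ∀ x y : R, σ x = -x → σ y = -y → x * y = -(y * x))
    (hPh : ∀ p ∈ P, σ p = p ∨ σ p = -p)
    {l : List R} (hl : ∀ p ∈ l, p ∈ P) (s : R) :
    ∃ s', l.prod * s = s' * l.prod := by
  induction l with
  | nil => exact ⟨s, by simp⟩
  | cons p l' ih =>
    obtain ⟨s', hs'⟩ := ih (fun q hq => hl q (List.mem_cons_of_mem _ hq))
    obtain ⟨s'', hs''⟩ := HCJ_homc σ P h2 hσ hsc1 hsc2 hPh (hl p (List.mem_cons_self)) s'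
    refine ⟨s'', ?_⟩
    rw [List.prod_cons, mul_assoc, hs', ← mul_assoc, hs'', mul_assoc]

theorem HCJ_mul (h2 : (2 : K) ≠ 0) (hσ : ∀ x, σ (σ x) = x)
    (hsc1 : ∀ x y : R, σ x = x → x * y = y * x)
    (hsc2 : ∀ x y : R, σ x = -x → σ y = -y → x * y = -(y * x))
    (hPh : ∀ p ∈ P, σ p = p ∨ σ p = -p)
    {m n : ℕ} {x y : R} (hx : x ∈ HCJ P m) (hy : y ∈ HCJ P n) :
    x * y ∈ HCJ P (m + n) := by
  induction hx using Submodule.span_induction with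
  | mem x hx =>
    obtain ⟨l, hlen, hmem, rfl⟩ := hx
    induction hy using Submodule.span_induction with
    | mem y hy =>
      obtain ⟨l', hlen', hmem', rfl⟩ := hy
      exact Submodule.subset_span ⟨l ++ l', by simp [hlen, hlen'],
        fun p hp => (List.mem_append.mp hp).elim (hmem p) (hmem' p),
        (List.prod_append).symm⟩
    | zero => simpa using Submodule.zero_mem _
    | add y₁ y₂ _ _ hy₁ hy₂ => rw [mul_add]; exact Submodule.add_mem _ hy₁ hy₂
    | smul a y₁ _ hy₁ =>
      obtain ⟨s', hs'⟩ := HCJ_mon_mul σ P h2 hσ hsc1 hsc2 hPh hmem a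
      rw [smul_eq_mul, ← mul_assoc, hs', mul_assoc]
      exact Submodule.smul_mem _ s' hy₁
  | zero => simpa using Submodule.zero_mem _
  | add x₁ x₂ _ _ hx₁ hx₂ => rw [add_mul]; exact Submodule.add_mem _ hx₁ hx₂
  | smul a x₁ _ hx₁ =>
    rw [smul_eq_mul, mul_assoc]
    exact Submodule.smul_mem _ a hx₁

theorem HCJ_succ_le (k : ℕ) : HCJ P (k + 1) ≤ HCJ P k := by
  rw [HCJ, Submodule.span_le]
  rintro x ⟨l, hlen, hmem, rfl⟩
  match l, hlen with
  | p :: l', hlen =>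
    rw [List.prod_cons, ← smul_eq_mul]
    exact Submodule.smul_mem _ p (Submodule.subset_span
      ⟨l', by simpa using hlen, fun q hq => hmem q (List.mem_cons_of_mem _ hq), rfl⟩)

theorem HCJ_le {m n : ℕ} (h : n ≤ m) : HCJ P m ≤ HCJ P n := by
  induction h with
  | refl => exact le_rfl
  | step h ih => exact le_trans (HCJ_succ_le P _) ih

theorem HCJ_ksmul {k : ℕ} {c : R} (hc : c ∈ HCJ P k) (κ : K) :
    κ • c ∈ HCJ P k := by
  rw [Algebra.smul_def, ← smul_eq_mul]
  exact Submodule.smul_mem _ _ hc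

theorem HCJ_dupkill (h2 : (2 : K) ≠ 0) (hσ : ∀ x, σ (σ x) = x)
    (hsc1 : ∀ x y : R, σ x = x → x * y = y * x)
    (hsc2 : ∀ x y : R, σ x = -x → σ y = -y → x * y = -(y * x))
    (hPh : ∀ p ∈ P, σ p = p ∨ σ p = -p) (hPs : ∀ p ∈ P, p * p = 0) :
    ∀ l : List R, (∀ p ∈ l, p ∈ P) → ¬ l.Nodup → l.prod = 0 := by
  intro l
  induction l with
  | nil => intro _ h; exact absurd List.nodup_nil h
  | cons p l' ih =>
    intro hmem hnd
    by_cases hp : p ∈ l'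
    · obtain ⟨s, u, rfl⟩ := List.append_of_mem hp
      obtain ⟨s', hs'⟩ := HCJ_homc σ P h2 hσ hsc1 hsc2 hPh (hmem p (List.mem_cons_self)) s.prod
      rw [List.prod_cons, List.prod_append, List.prod_cons, ← mul_assoc, hs',
        mul_assoc, ← mul_assoc p p, hPs p (hmem p (List.mem_cons_self)), zero_mul,
        mul_zero]
    · have : ¬ l'.Nodup := by
        intro hnd'
        exact hnd (List.nodup_cons.mpr ⟨hp, hnd'⟩)
      rw [List.prod_cons, ih (fun q hq => hmem q (List.mem_cons_of_mem _ hq)) this,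
        mul_zero]

theorem HCJ_nil (h2 : (2 : K) ≠ 0) (hσ : ∀ x, σ (σ x) = x)
    (hsc1 : ∀ x y : R, σ x = x → x * y = y * x)
    (hsc2 : ∀ x y : R, σ x = -x → σ y = -y → x * y = -(y * x))
    (hPh : ∀ p ∈ P, σ p = p ∨ σ p = -p) (hPs : ∀ p ∈ P, p * p = 0)
    {x : R} (hx : x ∈ HCJ P (P.length + 1)) : x = 0 := by
  induction hx using Submodule.span_induction with
  | mem x hx =>
    obtain ⟨l, hlen, hmem, rfl⟩ := hx
    apply HCJ_dupkill σ P h2 hσ hsc1 hsc2 hPh hPs l hmem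
    intro hnd
    have hsub : l ⊆ P := fun q hq => hmem q hq
    have hle := (List.subperm_of_subset hnd hsub).length_le
    omega
  | zero => rfl
  | add x y _ _ hx hy => rw [hx, hy, add_zero]
  | smul a x _ hx => rw [hx, smul_zero]

end JAux
def HCisE {R V G : Type*} [Ring R] (σ : R → R) (e : R → V → G) (J : Submodule R R)
    (z : G) : Prop :=
  ∃ a v, σ a = -a ∧ a ∈ J ∧ z = e a v

def HCisF {R Y G : Type*} [Ring R] [Group G] (σ : R → R) (f : R → Y → G)
    (J : Submodule R R) (z : G) : Prop :=
  ∃ b x, σ b = b ∧ b * b = 0 ∧ b ∈ J ∧ (z = f b x ∨ z = (f b x)⁻¹)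

def HCtail {R V G : Type*} [Monoid G] {t : ℕ} (e : R → V → G) (bv : Fin t → V)
    (as : Fin t → R) (m : ℕ) : G :=
  ((List.ofFn fun i => e (as i) (bv i)).drop m).prod

theorem HCisE_mono {R V G : Type*} [Ring R] {σ : R → R} {e : R → V → G}
    {J J' : Submodule R R} (h : J ≤ J') {z : G} :
    HCisE σ e J z → HCisE σ e J' z := by
  rintro ⟨a, v, ha, haJ, rfl⟩; exact ⟨a, v, ha, h haJ, rfl⟩

theorem HCisF_mono {R Y G : Type*} [Ring R] [Group G] {σ : R → R} {f : R → Y → G}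
    {J J' : Submodule R R} (h : J ≤ J') {z : G} :
    HCisF σ f J z → HCisF σ f J' z := by
  rintro ⟨b, x, hb, hb2, hbJ, hz⟩; exact ⟨b, x, hb, hb2, h hbJ, hz⟩

section GroupAux

variable {K R V Y G : Type*} [Field K] [Ring R] [Algebra K R]
  [AddCommGroup V] [Module K V] [Group G]
variable (σ : R →ₐ[K] R) (e : R → V → G) (f : R → Y → G)
variable (h2K : (2 : K) ≠ 0) (hσ : ∀ x, σ (σ x) = x)
variable (hsc1 : ∀ x y : R, σ x = x → x * y = y * x)
variable (hsc2 : ∀ x y : R, σ x = -x → σ y = -y → x * y = -(y * x))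
variable {t : ℕ} (bvB : Module.Basis (Fin t) K V)
variable (brr : V → V → Y) (q : V → Y) (ρ : Y → V → V)
variable (h1 : ∀ a a' v v', σ a = -a → σ a' = -a' →
  e a v * e a' v' = f (-(a * a')) (brr v v') * (e a' v' * e a v))
variable (h2' : ∀ b x a v, σ b = b → b * b = 0 → σ a = -a →
  f b x * e a v = e (b * a) (ρ x v) * (e a v * f b x))
variable (h4 : ∀ a a' v, σ a = -a → σ a' = -a' →
  e a v * e a' v = f (-(a * a')) (q v) * e (a + a') v)
variable (hadd : ∀ a v w, σ a = -a → e a v * e a w = e a (v + w))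
variable (hscale : ∀ a (c : K) v, σ a = -a → e a (c • v) = e (c • a) v)
variable (he0 : ∀ v, e 0 v = 1) (he0' : ∀ a, e a 0 = 1)
variable (hf0 : ∀ x, f 0 x = 1)
variable (P : List R) (hPh : ∀ p ∈ P, σ p = p ∨ σ p = -p) (hPs : ∀ p ∈ P, p * p = 0)

include h2K hsc2 h4 he0 hf0 in
theorem HCe_inv {a : R} (v : V) (ha : σ a = -a) : (e a v)⁻¹ = e (-a) v := by
  have hna : σ (-a) = -(-a) := by rw [map_neg, ha, neg_neg]
  have h0 : -(a * -a) = (0 : R) := by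
    rw [mul_neg, neg_neg, HCodd_sq σ h2K hsc2 ha]
  have := h4 a (-a) v ha hna
  rw [h0, hf0, one_mul, add_neg_cancel, he0] at this
  exact inv_eq_of_mul_eq_one_right this

include h2K hsc2 h2' h4 he0 hf0 in
theorem HCef_swap {a b : R} (v : V) (x : Y) (ha : σ a = -a) (hb : σ b = b)
    (hb2 : b * b = 0) :
    e a v * f b x = f b x * (e (-(b * a)) (ρ x v) * e a v) := by
  have hba : σ (b * a) = -(b * a) := by rw [map_mul, hb, ha, mul_neg]
  have hnba : σ (-(b * a)) = -(-(b * a)) := by rw [map_neg, hba, neg_neg]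
  have hA := h2' b x a v hb hb2 ha
  have hB := h2' b x (-(b * a)) (ρ x v) hb hb2 hnba
  have hz : b * -(b * a) = (0 : R) := by
    rw [mul_neg, ← mul_assoc, hb2, zero_mul, neg_zero]
  rw [hz, he0, one_mul] at hB
  have hC := h4 (-(b * a)) (b * a) (ρ x v) hnba hba
  have h0 : -(-(b * a) * (b * a)) = (0 : R) := by
    rw [neg_mul, neg_neg, HCodd_sq σ h2K hsc2 hba]
  rw [h0, hf0, one_mul, neg_add_cancel, he0] at hC
  have : f b x * (e (-(b * a)) (ρ x v) * e a v) = e a v * f b x := by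
    rw [← mul_assoc, hB, mul_assoc, hA, ← mul_assoc, hC, one_mul]
  exact this.symm

include h2' in
theorem HCef_inv_swap {a b : R} (v : V) (x : Y) (ha : σ a = -a) (hb : σ b = b)
    (hb2 : b * b = 0) :
    e a v * (f b x)⁻¹ = (f b x)⁻¹ * (e (b * a) (ρ x v) * e a v) := by
  have hA := h2' b x a v hb hb2 ha
  apply mul_left_cancel (a := f b x)
  rw [← mul_assoc, hA]
  group

include h2K hσ hsc1 hsc2 h1 h2' h4 he0 hf0 in
theorem HCpass (J₁ J₂ : Submodule R R) {a : R} (ha : σ a = -a) (v : V)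
    (hfa : ∀ β ∈ J₂, β * a ∈ J₁) (haf : ∀ d ∈ J₁, a * d ∈ J₂) :
    ∀ M : List G, (∀ z ∈ M, HCisE (⇑σ) e J₁ z ∨ HCisF (⇑σ) f J₂ z) →
    ∃ M' : List G, (∀ z ∈ M', HCisE (⇑σ) e J₁ z ∨ HCisF (⇑σ) f J₂ z) ∧
      e a v * M.prod = M'.prod * e a v := by
  intro M
  induction M with
  | nil => exact fun _ => ⟨[], by simp, by simp⟩
  | cons z M₀ ih =>
    intro hM
    obtain ⟨M₁, hM₁, heq₁⟩ := ih (fun w hw => hM w (List.mem_cons_of_mem _ hw))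
    rcases hM z (List.mem_cons_self) with ⟨d, u, hd, hdJ, rfl⟩ |
      ⟨b, x, hb, hb2, hbJ, hz⟩
    · refine ⟨f (-(a * d)) (brr v u) :: e d u :: M₁, ?_, ?_⟩
      · rw [List.forall_mem_cons, List.forall_mem_cons]
        refine ⟨Or.inr ⟨-(a * d), brr v u, ?_, ?_, neg_mem (haf d hdJ), Or.inl rfl⟩,
          Or.inl ⟨d, u, hd, hdJ, rfl⟩, hM₁⟩
        · rw [map_neg, map_mul, ha, hd, neg_mul_neg]
        · rw [neg_mul_neg]; exact HCoo_sq σ h2K hsc2 ha hd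
      · simp only [List.prod_cons]
        rw [← mul_assoc, h1 a d v u ha hd, mul_assoc, mul_assoc, heq₁]
        simp only [mul_assoc]
    · rcases hz with rfl | rfl
      · refine ⟨f b x :: e (-(b * a)) (ρ x v) :: M₁, ?_, ?_⟩
        · rw [List.forall_mem_cons, List.forall_mem_cons]
          refine ⟨Or.inr ⟨b, x, hb, hb2, hbJ, Or.inl rfl⟩,
            Or.inl ⟨-(b * a), ρ x v, ?_, neg_mem (hfa b hbJ), rfl⟩, hM₁⟩
          rw [map_neg, map_mul, hb, ha, mul_neg, neg_neg]
        · simp only [List.prod_cons]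
          rw [← mul_assoc, HCef_swap σ e f h2K hsc2 q ρ h2' h4 he0 hf0 v x ha hb hb2,
            mul_assoc, mul_assoc, heq₁]
          simp only [mul_assoc]
      · refine ⟨(f b x)⁻¹ :: e (b * a) (ρ x v) :: M₁, ?_, ?_⟩
        · rw [List.forall_mem_cons, List.forall_mem_cons]
          refine ⟨Or.inr ⟨b, x, hb, hb2, hbJ, Or.inr rfl⟩,
            Or.inl ⟨b * a, ρ x v, ?_, hfa b hbJ, rfl⟩, hM₁⟩
          rw [map_mul, hb, ha, mul_neg]
        · simp only [List.prod_cons]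
          rw [← mul_assoc, HCef_inv_swap σ e f ρ h2' v x ha hb hb2,
            mul_assoc, mul_assoc, heq₁]
          simp only [mul_assoc]

include h2K hsc2 h1 h2' h4 he0 hf0 in
theorem HCsep_one (Jf Je : Submodule R R)
    (hmul : ∀ b ∈ Jf, ∀ c ∈ Je, b * c ∈ Je)
    {z : G} (hz : HCisF (⇑σ) f Jf z) :
    ∀ We : List G, (∀ w ∈ We, HCisE (⇑σ) e Je w) →
    ∃ We₂ : List G, (∀ w ∈ We₂, HCisE (⇑σ) e Je w) ∧
      We.prod * z = z * We₂.prod := by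
  intro We
  induction We with
  | nil => exact fun _ => ⟨[], by simp, by simp⟩
  | cons w We'' ih =>
    intro hWe
    obtain ⟨We₂, hWe₂, heq₂⟩ := ih (fun y hy => hWe y (List.mem_cons_of_mem _ hy))
    obtain ⟨c, v, hc, hcJ, rfl⟩ := hWe w (List.mem_cons_self)
    obtain ⟨b, x, hb, hb2, hbJ, hzz⟩ := hz
    rcases hzz with rfl | rfl
    · refine ⟨e (-(b * c)) (ρ x v) :: e c v :: We₂, ?_, ?_⟩
      · rw [List.forall_mem_cons, List.forall_mem_cons]
        refine ⟨⟨-(b * c), ρ x v, ?_, neg_mem (hmul b hbJ c hcJ), rfl⟩,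
          ⟨c, v, hc, hcJ, rfl⟩, hWe₂⟩
        rw [map_neg, map_mul, hb, hc, mul_neg, neg_neg]
      · simp only [List.prod_cons]
        rw [mul_assoc, heq₂, ← mul_assoc,
          HCef_swap σ e f h2K hsc2 q ρ h2' h4 he0 hf0 v x hc hb hb2]
        simp only [mul_assoc]
    · refine ⟨e (b * c) (ρ x v) :: e c v :: We₂, ?_, ?_⟩
      · rw [List.forall_mem_cons, List.forall_mem_cons]
        refine ⟨⟨b * c, ρ x v, ?_, hmul b hbJ c hcJ, rfl⟩,
          ⟨c, v, hc, hcJ, rfl⟩, hWe₂⟩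
        rw [map_mul, hb, hc, mul_neg]
      · simp only [List.prod_cons]
        rw [mul_assoc, heq₂, ← mul_assoc,
          HCef_inv_swap σ e f ρ h2' v x hc hb hb2]
        simp only [mul_assoc]

include h2K hsc2 h1 h2' h4 he0 hf0 in
theorem HCsep (Jf Je : Submodule R R)
    (hmul : ∀ b ∈ Jf, ∀ c ∈ Je, b * c ∈ Je) :
    ∀ Wf : List G, (∀ z ∈ Wf, HCisF (⇑σ) f Jf z) →
    ∀ We : List G, (∀ w ∈ We, HCisE (⇑σ) e Je w) →
    ∃ We' : List G, (∀ w ∈ We', HCisE (⇑σ) e Je w) ∧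
      We.prod * Wf.prod = Wf.prod * We'.prod := by
  intro Wf
  induction Wf with
  | nil => exact fun _ We hWe => ⟨We, hWe, by simp⟩
  | cons z Wf' ih =>
    intro hWf We hWe
    obtain ⟨We₂, hWe₂, heq₂⟩ := HCsep_one σ e f h2K hsc2 brr q ρ h1 h2' h4 he0 hf0 Jf Je
      hmul (hWf z (List.mem_cons_self)) We hWe
    obtain ⟨We₃, hWe₃, heq₃⟩ := ih (fun y hy => hWf y (List.mem_cons_of_mem _ hy))
      We₂ hWe₂
    refine ⟨We₃, hWe₃, ?_⟩
    simp only [List.prod_cons]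
    rw [← mul_assoc, heq₂, mul_assoc, heq₃, ← mul_assoc]

omit [Field K] [Algebra K R] [AddCommGroup V] [Module K V] in
theorem HCtail_cons (bv : Fin t → V) (as : Fin t → R) {m : ℕ} (h : m < t) :
    HCtail e bv as m = e (as ⟨m, h⟩) (bv ⟨m, h⟩) * HCtail e bv as (m + 1) := by
  unfold HCtail
  rw [List.drop_eq_getElem_cons (by simpa using h), List.prod_cons, List.getElem_ofFn]

omit [Field K] [Algebra K R] [AddCommGroup V] [Module K V] in
theorem HCtail_update_high (bv : Fin t → V) (as : Fin t → R) (j : Fin t) (x : R)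
    {m : ℕ} (h : (j : ℕ) < m) :
    HCtail e bv (Function.update as j x) m = HCtail e bv as m := by
  unfold HCtail
  congr 1
  apply List.ext_getElem (by simp)
  intro i h1 h2
  simp only [List.getElem_drop, List.getElem_ofFn]
  rw [Function.update_of_ne (by rw [Ne, Fin.ext_iff]; simp; omega)]

include h2K hσ hsc1 hsc2 h1 h2' h4 he0 hf0 hPh in
theorem HCins : ∀ (dj m : ℕ) (j : Fin t), m + dj = (j : ℕ) →
    ∀ (k : ℕ) (c : R), σ c = -c → c ∈ HCJ P k →
    ∀ as : Fin t → R, (∀ i, σ (as i) = -(as i) ∧ as i ∈ HCJ P 1) →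
    ∃ M : List G,
      (∀ z ∈ M, HCisE (⇑σ) e (HCJ P (k + 2)) z ∨ HCisF (⇑σ) f (HCJ P (k + 1)) z) ∧
      e c (bvB j) * HCtail e (⇑bvB) as m =
        M.prod * HCtail e (⇑bvB) (Function.update as j (c + as j)) m := by
  intro dj
  induction dj with
  | zero =>
    intro m j hm k c hc hck as has
    have hmt : m < t := by have := j.isLt; omega
    have hj : (⟨m, hmt⟩ : Fin t) = j := Fin.ext (by simpa using hm)
    refine ⟨[f (-(c * as j)) (q (bvB j))], ?_, ?_⟩
    · intro z hz
      rw [List.mem_singleton] at hz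
      subst hz
      refine Or.inr ⟨-(c * as j), q (bvB j), ?_, ?_,
        neg_mem (HCJ_mul σ P h2K hσ hsc1 hsc2 hPh hck (has j).2), Or.inl rfl⟩
      · rw [map_neg, map_mul, hc, (has j).1, neg_mul_neg]
      · rw [neg_mul_neg]; exact HCoo_sq σ h2K hsc2 hc (has j).1
    · rw [HCtail_cons e (⇑bvB) as hmt, HCtail_cons e (⇑bvB) (Function.update as j (c + as j)) hmt,
        hj, Function.update_self, HCtail_update_high e (⇑bvB) as j _ (by omega),
        ← mul_assoc, h4 c (as j) (bvB j) hc (has j).1]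
      simp only [List.prod_singleton, mul_assoc]
  | succ dj ih =>
    intro m j hm k c hc hck as has
    have hmj : m < (j : ℕ) := by omega
    have hmt : m < t := by have := j.isLt; omega
    set mF : Fin t := ⟨m, hmt⟩ with hmF
    have hne : mF ≠ j := Fin.ne_of_val_ne (show m ≠ (j:ℕ) by omega)
    obtain ⟨M', hM', heq'⟩ := ih (m + 1) j (by omega) k c hc hck as has
    obtain ⟨M'', hM'', heq''⟩ := HCpass σ e f h2K hσ hsc1 hsc2 brr q ρ h1 h2' h4 he0 hf0
      (HCJ P (k + 2)) (HCJ P (k + 1)) (has mF).1 (bvB mF)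
      (fun β hβ => HCJ_mul σ P h2K hσ hsc1 hsc2 hPh (m := k+1) (n := 1) hβ (has mF).2)
      (fun d hd => HCJ_le P (by omega) (HCJ_mul σ P h2K hσ hsc1 hsc2 hPh (has mF).2 hd))
      M' hM'
    refine ⟨f (-(c * as mF)) (brr (bvB j) (bvB mF)) :: M'', ?_, ?_⟩
    · rw [List.forall_mem_cons]
      refine ⟨Or.inr ⟨-(c * as mF), brr (bvB j) (bvB mF), ?_, ?_,
        neg_mem (HCJ_mul σ P h2K hσ hsc1 hsc2 hPh hck (has mF).2), Or.inl rfl⟩, hM''⟩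
      · rw [map_neg, map_mul, hc, (has mF).1, neg_mul_neg]
      · rw [neg_mul_neg]; exact HCoo_sq σ h2K hsc2 hc (has mF).1
    · rw [HCtail_cons e (⇑bvB) as hmt, HCtail_cons e (⇑bvB) (Function.update as j (c + as j)) hmt,
        ← hmF, Function.update_of_ne hne, ← mul_assoc,
        h1 c (as mF) (bvB j) (bvB mF) hc (has mF).1]
      simp only [List.prod_cons, mul_assoc]
      rw [heq', ← mul_assoc (e (as mF) (bvB mF)) M'.prod, heq'', mul_assoc]

include hadd hscale he0' in
theorem HCsplit {c : R} (v : V) (hc : σ c = -c) :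
    e c v = (List.ofFn fun j : Fin t => e ((bvB.repr v j) • c) (bvB j)).prod := by
  have lsum : ∀ l : List V, e c l.sum = (l.map (e c)).prod := by
    intro l
    induction l with
    | nil => simpa using he0' c
    | cons a l ih =>
      rw [List.sum_cons, List.map_cons, List.prod_cons, ← ih, ← hadd c a l.sum hc]
  calc e c v = e c ((List.ofFn fun j => bvB.repr v j • bvB j).sum) := by
        rw [List.sum_ofFn, Module.Basis.sum_repr]
    _ = ((List.ofFn fun j => bvB.repr v j • bvB j).map (e c)).prod := lsum _
    _ = (List.ofFn fun j : Fin t => e ((bvB.repr v j) • c) (bvB j)).prod := by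
        rw [List.map_ofFn]
        exact congrArg List.prod (congrArg List.ofFn (funext fun j => hscale c _ _ hc))

include h2K hσ hsc1 hsc2 h1 h2' h4 he0 hf0 hPh in
theorem HCiter (k : ℕ) (hk : 1 ≤ k) :
    ∀ l : List G, (∀ z ∈ l, ∃ (c : R) (j : Fin t), σ c = -c ∧ c ∈ HCJ P k ∧ z = e c (bvB j)) →
    ∀ as : Fin t → R, (∀ i, σ (as i) = -(as i) ∧ as i ∈ HCJ P 1) →
    ∃ M : List G,
      (∀ z ∈ M, HCisE (⇑σ) e (HCJ P (k + 1)) z ∨ HCisF (⇑σ) f (HCJ P (k + 1)) z) ∧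
      ∃ as', (∀ i, σ (as' i) = -(as' i) ∧ as' i ∈ HCJ P 1) ∧
        l.prod * HCtail e (⇑bvB) as 0 = M.prod * HCtail e (⇑bvB) as' 0 := by
  intro l
  induction l with
  | nil => exact fun _ as has => ⟨[], by simp, as, has, by simp⟩
  | cons z l' ih =>
    intro hl as has
    obtain ⟨M₁, hM₁, as₁, has₁, heq₁⟩ := ih (fun y hy => hl y (List.mem_cons_of_mem _ hy)) as has
    obtain ⟨c, j, hc, hck, rfl⟩ := hl z (List.mem_cons_self)
    obtain ⟨M₂, hM₂, heq₂⟩ := HCpass σ e f h2K hσ hsc1 hsc2 brr q ρ h1 h2' h4 he0 hf0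
      (HCJ P (k + 1)) (HCJ P (k + 1)) hc (bvB j)
      (fun β hβ => HCJ_le P (by omega) (HCJ_mul σ P h2K hσ hsc1 hsc2 hPh hβ hck))
      (fun d hd => HCJ_le P (by omega) (HCJ_mul σ P h2K hσ hsc1 hsc2 hPh hck hd))
      M₁ hM₁
    obtain ⟨M₃, hM₃, heq₃⟩ := HCins σ e f h2K hσ hsc1 hsc2 bvB brr q ρ h1 h2' h4 he0 hf0
      P hPh j 0 j (by simp) k c hc hck as₁ has₁
    refine ⟨M₂ ++ M₃, ?_, Function.update as₁ j (c + as₁ j), ?_, ?_⟩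
    · intro y hy
      rcases List.mem_append.mp hy with hy | hy
      · exact hM₂ y hy
      · rcases hM₃ y hy with hE | hF
        · exact Or.inl (HCisE_mono (HCJ_le P (by omega)) hE)
        · exact Or.inr hF
    · intro i
      by_cases hi : i = j
      · subst hi
        rw [Function.update_self]
        refine ⟨?_, add_mem (HCJ_le P hk hck) (has₁ i).2⟩
        rw [map_add, hc, (has₁ i).1, neg_add]
      · rw [Function.update_of_ne hi]
        exact has₁ i
    · rw [List.prod_cons, List.prod_append, mul_assoc, heq₁, ← mul_assoc, heq₂,
        mul_assoc, heq₃, ← mul_assoc]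

include h2K hσ hsc1 hsc2 h1 h2' h4 hadd hscale he0 he0' hf0 hPh in
theorem HCelist (k : ℕ) (hk : 1 ≤ k) :
    ∀ We : List G, (∀ z ∈ We, HCisE (⇑σ) e (HCJ P k) z) →
    ∀ as : Fin t → R, (∀ i, σ (as i) = -(as i) ∧ as i ∈ HCJ P 1) →
    ∃ M : List G,
      (∀ z ∈ M, HCisE (⇑σ) e (HCJ P (k + 1)) z ∨ HCisF (⇑σ) f (HCJ P (k + 1)) z) ∧
      ∃ as', (∀ i, σ (as' i) = -(as' i) ∧ as' i ∈ HCJ P 1) ∧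
        We.prod * HCtail e (⇑bvB) as 0 = M.prod * HCtail e (⇑bvB) as' 0 := by
  intro We
  induction We with
  | nil => exact fun _ as has => ⟨[], by simp, as, has, by simp⟩
  | cons z We'' ih =>
    intro hWe as has
    obtain ⟨M₁, hM₁, as₁, has₁, heq₁⟩ := ih (fun y hy => hWe y (List.mem_cons_of_mem _ hy)) as has
    obtain ⟨c, v, hc, hck, rfl⟩ := hWe z (List.mem_cons_self)
    obtain ⟨M₂, hM₂, heq₂⟩ := HCpass σ e f h2K hσ hsc1 hsc2 brr q ρ h1 h2' h4 he0 hf0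
      (HCJ P (k + 1)) (HCJ P (k + 1)) hc v
      (fun β hβ => HCJ_le P (by omega) (HCJ_mul σ P h2K hσ hsc1 hsc2 hPh hβ hck))
      (fun d hd => HCJ_le P (by omega) (HCJ_mul σ P h2K hσ hsc1 hsc2 hPh hck hd))
      M₁ hM₁
    have hmem : ∀ y ∈ (List.ofFn fun j : Fin t => e ((bvB.repr v j) • c) (bvB j)),
        ∃ (c' : R) (j : Fin t), σ c' = -c' ∧ c' ∈ HCJ P k ∧ y = e c' (bvB j) := by
      intro y hy
      rw [List.mem_ofFn] at hy
      obtain ⟨j, rfl⟩ := hy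
      refine ⟨bvB.repr v j • c, j, ?_, HCJ_ksmul P hck _, rfl⟩
      rw [map_smul, hc, smul_neg]
    obtain ⟨M₃, hM₃, as₂, has₂, heq₃⟩ := HCiter σ e f h2K hσ hsc1 hsc2 bvB brr q ρ
      h1 h2' h4 he0 hf0 P hPh k hk
      (List.ofFn fun j : Fin t => e ((bvB.repr v j) • c) (bvB j)) hmem as₁ has₁
    refine ⟨M₂ ++ M₃, ?_, as₂, has₂, ?_⟩
    · intro y hy
      rcases List.mem_append.mp hy with hy | hy
      · exact hM₂ y hy
      · exact hM₃ y hy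
    · rw [List.prod_cons, List.prod_append, mul_assoc, heq₁, ← mul_assoc, heq₂,
        mul_assoc, HCsplit σ e bvB hadd hscale he0' v hc, heq₃, ← mul_assoc]
include h2K hσ hsc1 hsc2 h1 h2' h4 hadd hscale he0 he0' hf0 hPh hPs in
theorem HCmain : ∀ d k : ℕ, 1 ≤ k → P.length + 1 ≤ k + d →
    ∀ W : List G, (∀ z ∈ W, HCisE (⇑σ) e (HCJ P k) z ∨ HCisF (⇑σ) f (HCJ P k) z) →
    ∀ as : Fin t → R, (∀ i, σ (as i) = -(as i) ∧ as i ∈ HCJ P 1) →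
    ∃ Wf : List G, (∀ z ∈ Wf, HCisF (⇑σ) f (HCJ P k) z) ∧
    ∃ as', (∀ i, σ (as' i) = -(as' i) ∧ as' i ∈ HCJ P 1) ∧
      W.prod * HCtail e (⇑bvB) as 0 = Wf.prod * HCtail e (⇑bvB) as' 0 := by
  intro d
  induction d with
  | zero =>
    intro k hk hkd W hW as has
    refine ⟨[], by simp, as, has, ?_⟩
    have hprod : W.prod = 1 := by
      apply List.prod_eq_one
      intro z hz
      rcases hW z hz with ⟨a, v, ha, haJ, rfl⟩ | ⟨b, x, hb, hb2, hbJ, hz'⟩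
      · have ha0 : a = 0 :=
          HCJ_nil σ P h2K hσ hsc1 hsc2 hPh hPs (HCJ_le P (by omega) haJ)
        rw [ha0, he0]
      · have hb0 : b = 0 :=
          HCJ_nil σ P h2K hσ hsc1 hsc2 hPh hPs (HCJ_le P (by omega) hbJ)
        rcases hz' with rfl | rfl
        · rw [hb0, hf0]
        · rw [hb0, hf0, inv_one]
    rw [hprod, List.prod_nil]
  | succ d ihd =>
    intro k hk hkd W
    induction W with
    | nil => exact fun _ as has => ⟨[], by simp, as, has, by simp⟩
    | cons z W' ihW =>
      intro hW as has
      obtain ⟨Wf₁, hWf₁, as₁, has₁, heq₁⟩ :=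
        ihW (fun y hy => hW y (List.mem_cons_of_mem _ hy)) as has
      rcases hW z (List.mem_cons_self) with hE | hF
      · obtain ⟨c, v, hc, hck, rfl⟩ := hE
        obtain ⟨We', hWe', heqS⟩ := HCsep σ e f h2K hsc2 brr q ρ h1 h2' h4 he0 hf0
          (HCJ P k) (HCJ P k)
          (fun b hb c' hc' => HCJ_le P (by omega) (HCJ_mul σ P h2K hσ hsc1 hsc2 hPh hb hc'))
          Wf₁ hWf₁ [e c v] (by
            intro y hy
            rw [List.mem_singleton] at hy
            subst hy
            exact ⟨c, v, hc, hck, rfl⟩)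
        rw [List.prod_singleton] at heqS
        obtain ⟨M, hM, as₂, has₂, heqE⟩ := HCelist σ e f h2K hσ hsc1 hsc2 bvB brr q ρ
          h1 h2' h4 hadd hscale he0 he0' hf0 P hPh k hk We' hWe' as₁ has₁
        obtain ⟨Wf₂, hWf₂, as₃, has₃, heqM⟩ := ihd (k + 1) (by omega) (by omega) M hM as₂ has₂
        refine ⟨Wf₁ ++ Wf₂, ?_, as₃, has₃, ?_⟩
        · intro y hy
          rcases List.mem_append.mp hy with hy | hy
          · exact hWf₁ y hy
          · exact HCisF_mono (HCJ_le P (by omega)) (hWf₂ y hy)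
        · have step : (e c v :: W').prod * HCtail e (⇑bvB) as 0 =
              Wf₁.prod * (Wf₂.prod * HCtail e (⇑bvB) as₃ 0) := by
            rw [List.prod_cons, mul_assoc, heq₁, ← mul_assoc, heqS, mul_assoc, heqE, heqM]
          rw [step, List.prod_append, mul_assoc]
      · refine ⟨z :: Wf₁, ?_, as₁, has₁, ?_⟩
        · intro y hy
          rcases List.mem_cons.mp hy with rfl | hy
          · exact hF
          · exact hWf₁ y hy
        · simp only [List.prod_cons, mul_assoc]
          rw [heq₁]

include h2K hsc2 h4 he0 hf0 in
theorem HCbuildP :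
    ∀ l : List G,
      (∀ z ∈ l,
        z ∈ ({g | ∃ a v, σ a = -a ∧ g = e a v} ∪
             {g | ∃ b x, σ b = b ∧ b * b = 0 ∧ g = f b x} : Set G) ∨
        z⁻¹ ∈ ({g | ∃ a v, σ a = -a ∧ g = e a v} ∪
             {g | ∃ b x, σ b = b ∧ b * b = 0 ∧ g = f b x} : Set G)) →
    ∃ P : List R, (∀ p ∈ P, σ p = p ∨ σ p = -p) ∧ (∀ p ∈ P, p * p = 0) ∧
      ∀ z ∈ l, HCisE (⇑σ) e (HCJ P 1) z ∨ HCisF (⇑σ) f (HCJ P 1) z := by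
  intro l
  induction l with
  | nil => exact fun _ => ⟨[], by simp, by simp, by simp⟩
  | cons z l' ih =>
    intro h
    obtain ⟨P', hP1, hP2, hPl⟩ := ih (fun y hy => h y (List.mem_cons_of_mem _ hy))
    have tailmono : ∀ (p : R), ∀ y ∈ l',
        HCisE (⇑σ) e (HCJ (p :: P') 1) y ∨ HCisF (⇑σ) f (HCJ (p :: P') 1) y := by
      intro p y hy
      rcases hPl y hy with hE | hF
      · exact Or.inl (HCisE_mono
          (HCJ_mono_list P' (fun r hr => List.mem_cons_of_mem _ hr) 1) hE)
      · exact Or.inr (HCisF_mono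
          (HCJ_mono_list P' (fun r hr => List.mem_cons_of_mem _ hr) 1) hF)
    rcases h z (List.mem_cons_self) with hz | hz
    · rcases hz with ⟨a, v, ha, rfl⟩ | ⟨b, x, hb, hb2, rfl⟩
      · refine ⟨a :: P', ?_, ?_, ?_⟩
        · intro p hp
          rcases List.mem_cons.mp hp with rfl | hp
          exacts [Or.inr ha, hP1 p hp]
        · intro p hp
          rcases List.mem_cons.mp hp with rfl | hp
          exacts [HCodd_sq σ h2K hsc2 ha, hP2 p hp]
        · intro y hy
          rcases List.mem_cons.mp hy with rfl | hy
          · exact Or.inl ⟨a, v, ha, HCJ_param _ (List.mem_cons_self), rfl⟩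
          · exact tailmono a y hy
      · refine ⟨b :: P', ?_, ?_, ?_⟩
        · intro p hp
          rcases List.mem_cons.mp hp with rfl | hp
          exacts [Or.inl hb, hP1 p hp]
        · intro p hp
          rcases List.mem_cons.mp hp with rfl | hp
          exacts [hb2, hP2 p hp]
        · intro y hy
          rcases List.mem_cons.mp hy with rfl | hy
          · exact Or.inr ⟨b, x, hb, hb2, HCJ_param _ (List.mem_cons_self), Or.inl rfl⟩
          · exact tailmono b y hy
    · rcases hz with ⟨a, v, ha, heq⟩ | ⟨b, x, hb, hb2, heq⟩
      · have hz' : z = e (-a) v := by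
          rw [← inv_inv z, heq, HCe_inv σ e f h2K hsc2 q h4 he0 hf0 v ha]
        refine ⟨a :: P', ?_, ?_, ?_⟩
        · intro p hp
          rcases List.mem_cons.mp hp with rfl | hp
          exacts [Or.inr ha, hP1 p hp]
        · intro p hp
          rcases List.mem_cons.mp hp with rfl | hp
          exacts [HCodd_sq σ h2K hsc2 ha, hP2 p hp]
        · intro y hy
          rcases List.mem_cons.mp hy with rfl | hy
          · exact Or.inl ⟨-a, v, by rw [map_neg, ha, neg_neg],
              neg_mem (HCJ_param _ (List.mem_cons_self)), hz'⟩
          · exact tailmono a y hy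
      · have hz' : z = (f b x)⁻¹ := by rw [← inv_inv z, heq]
        refine ⟨b :: P', ?_, ?_, ?_⟩
        · intro p hp
          rcases List.mem_cons.mp hp with rfl | hp
          exacts [Or.inl hb, hP1 p hp]
        · intro p hp
          rcases List.mem_cons.mp hp with rfl | hp
          exacts [hb2, hP2 p hp]
        · intro y hy
          rcases List.mem_cons.mp hy with rfl | hy
          · exact Or.inr ⟨b, x, hb, hb2, HCJ_param _ (List.mem_cons_self), Or.inr hz'⟩
          · exact tailmono b y hy

theorem HCWf_closure (J : Submodule R R) (Wf : List G)
    (h : ∀ z ∈ Wf, HCisF (⇑σ) f J z) :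
    Wf.prod ∈ Subgroup.closure ({g | ∃ b x, σ b = b ∧ b * b = 0 ∧ g = f b x} : Set G) := by
  apply Subgroup.list_prod_mem
  intro z hz
  rcases h z hz with ⟨b, x, hb, hb2, hbJ, rfl | rfl⟩
  · exact Subgroup.subset_closure ⟨b, x, hb, hb2, rfl⟩
  · exact inv_mem (Subgroup.subset_closure ⟨b, x, hb, hb2, rfl⟩)

end GroupAux

theorem HCexists_list {G : Type*} [Group G] {s : Set G} {x : G}
    (hx : x ∈ Subgroup.closure s) :
    ∃ l : List G, (∀ z ∈ l, z ∈ s ∨ z⁻¹ ∈ s) ∧ l.prod = x := by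
  induction hx using Subgroup.closure_induction with
  | mem x hx =>
    refine ⟨[x], ?_, by simp⟩
    intro z hz
    rw [List.mem_singleton] at hz
    subst hz
    exact Or.inl hx
  | one => exact ⟨[], by simp, rfl⟩
  | mul x y hx hy ihx ihy =>
    obtain ⟨l₁, h₁, e₁⟩ := ihx
    obtain ⟨l₂, h₂, e₂⟩ := ihy
    refine ⟨l₁ ++ l₂, ?_, by rw [List.prod_append, e₁, e₂]⟩
    intro z hz
    rcases List.mem_append.mp hz with h | h
    exacts [h₁ z h, h₂ z h]
  | inv x hx ihx =>
    obtain ⟨l, h, ep⟩ := ihx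
    refine ⟨(l.map (·⁻¹)).reverse, ?_, ?_⟩
    · intro z hz
      rw [List.mem_reverse, List.mem_map] at hz
      obtain ⟨y, hy, rfl⟩ := hz
      rcases h y hy with h' | h'
      · exact Or.inr (by rwa [inv_inv])
      · exact Or.inl h'
    · rw [← ep, List.prod_inv_reverse]

/-- In the group `Γ(R)` generated by elements `e(a,v)` (`a ∈ R₁`,
`v ∈ V`) and `f(b,x)` (`b ∈ R₀`, `b² = 0`, `x ∈ g`) subject to the relations (1)–(4) of
the Harish-Chandra pair construction (together with linearity of `e` in its second
argument and triviality for zero parameters), fix a basis `v₁, …, v_t` of `V`.  Then every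
element of the subgroup generated by the `e(a,v)` and `f(b,x)` can be written as
`f · e(a₁, v₁) ⋯ e(a_t, v_t)` with `f` in the subgroup generated by the `f(b,x)` and
`aᵢ ∈ R₁`.  (Here the ambient group `G` is an arbitrary group in which such families of
elements satisfying the relations are given.) -/
theorem normal_form_in_harish_chandra_group
    {K R V 𝔤 G : Type*} [Field K] (h2 : (2 : K) ≠ 0)
    [Ring R] [Algebra K R] [AddCommGroup V] [Module K V]
    [LieRing 𝔤] [LieAlgebra K 𝔤] [Group G]
    (σ : R →ₐ[K] R) (hσ : ∀ x, σ (σ x) = x)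
    (hsc : (∀ x y : R, σ x = x → x * y = y * x) ∧
           (∀ x y : R, σ x = -x → σ y = -y → x * y = -(y * x)))
    {t : ℕ} (bv : Module.Basis (Fin t) K V)
    (br : V →ₗ[K] V →ₗ[K] 𝔤) (hbr : ∀ v w, br v w = br w v)
    (ρ : 𝔤 →ₗ[K] V →ₗ[K] V)
    (e : R → V → G) (f : R → 𝔤 → G)
    -- relation (1):  [e(a,v), e(a',v')] = f(−aa', [v,v'])
    (h1 : ∀ a a' v v', σ a = -a → σ a' = -a' →
      e a v * e a' v' = f (-(a * a')) (br v v') * (e a' v' * e a v))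
    -- relation (2):  [f(b,x), e(a,v)] = e(ba, [x,v])
    (h2' : ∀ b x a v, σ b = b → b * b = 0 → σ a = -a →
      f b x * e a v = e (b * a) (ρ x v) * (e a v * f b x))
    -- relation (3):  [f(b,x), f(b',x')] = f(bb', [x,x'])
    (h3 : ∀ b b' x x', σ b = b → b * b = 0 → σ b' = b' → b' * b' = 0 →
      f b x * f b' x' = f (b * b') ⁅x, x'⁆ * (f b' x' * f b x))
    -- relation (4):  e(a,v) e(a',v) = f(−aa', ½[v,v]) e(a+a', v)
    (h4 : ∀ a a' v, σ a = -a → σ a' = -a' →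
      e a v * e a' v = f (-(a * a')) ((2 : K)⁻¹ • br v v) * e (a + a') v)
    -- linearity of `e` in the second argument, and triviality for zero parameters
    (hadd : ∀ a v w, σ a = -a → e a v * e a w = e a (v + w))
    (hscale : ∀ a (c : K) v, σ a = -a → e a (c • v) = e (c • a) v)
    (he0 : ∀ v, e 0 v = 1) (he0' : ∀ a, e a 0 = 1)
    (hf0 : ∀ x, f 0 x = 1) (hf0' : ∀ b, f b 0 = 1) :
    ∀ w ∈ Subgroup.closure
        ({g | ∃ a v, σ a = -a ∧ g = e a v} ∪
         {g | ∃ b x, σ b = b ∧ b * b = 0 ∧ g = f b x} : Set G),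
      ∃ fe ∈ Subgroup.closure ({g | ∃ b x, σ b = b ∧ b * b = 0 ∧ g = f b x} : Set G),
        ∃ as : Fin t → R, (∀ i, σ (as i) = -(as i)) ∧
          w = fe * (List.ofFn fun i => e (as i) (bv i)).prod := by
  intro w hw
  obtain ⟨l, hl, hlp⟩ := HCexists_list hw
  obtain ⟨P, hP1, hP2, hPl⟩ := HCbuildP σ e f h2 hsc.2
    (fun v => (2 : K)⁻¹ • br v v) h4 he0 hf0 l hl
  have hPl1 : ∀ z ∈ l, HCisE (⇑σ) e (HCJ P 1) z ∨ HCisF (⇑σ) f (HCJ P 1) z := hPl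
  obtain ⟨Wf, hWf, as', has', heq⟩ := HCmain σ e f h2 hσ hsc.1 hsc.2 bv
    (fun v w => br v w) (fun v => (2 : K)⁻¹ • br v v) (fun x v => ρ x v)
    h1 h2' h4 hadd hscale he0 he0' hf0 P hP1 hP2
    P.length 1 le_rfl (by omega) l hPl1 (fun _ => 0)
    (fun i => ⟨by simp, Submodule.zero_mem _⟩)
  have htail0 : HCtail e (⇑bv) (fun _ => (0 : R)) 0 = 1 := by
    unfold HCtail
    rw [List.drop_zero]
    apply List.prod_eq_one
    intro z hz
    rw [List.mem_ofFn] at hz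
    obtain ⟨i, hi⟩ := hz
    rw [← hi]
    exact he0 _
  have htail' : HCtail e (⇑bv) as' 0 = (List.ofFn fun i => e (as' i) (bv i)).prod := by
    unfold HCtail
    rw [List.drop_zero]
  refine ⟨Wf.prod, HCWf_closure σ f _ Wf hWf, as', fun i => (has' i).1, ?_⟩
  calc w = l.prod * HCtail e (⇑bv) (fun _ => (0 : R)) 0 := by rw [htail0, mul_one, hlp]
    _ = Wf.prod * HCtail e (⇑bv) as' 0 := heq
    _ = Wf.prod * (List.ofFn fun i => e (as' i) (bv i)).prod := by rw [htail']
end
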